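/- arXiv:1110.0728 — 2 statements merged into one kernel-verified Lean document; each statement's English description precedes it below -/
import Mathlib

section
/- Let N be a 1-nested phylogenetic network on a finite set X with |X| ≥ 2, let S ⊆ X and z ∈ S be such that one of the four reductions R_{z:S} ∈ {C_{z:S}, C̄_{z:S}, H_{z:S}, H̄_{z:S}} may be applied to N. Then R_{z:S}(N) is a 1-nested phylogenetic network on the set X − (S − {z}), and it has |S| − 1 fewer leaves than N. -/
/-!
Common formalization infrastructure for 1-nested phylogenetic networks and trinets
(Huber–Moulton, "Encoding and Constructing 1-Nested Phylogenetic Networks with Trinets").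

Networks are modelled concretely: the vertex set is a finite set of natural numbers,
arcs are a finite set of ordered pairs (so there are no multiple arcs), and leaves are
labelled by themselves (i.e. the leaf set of a network on `X` is literally `X`).
-/

noncomputable section

/-- A finite directed graph with vertex set `verts ⊆ ℕ`, arc set `arcs`
(ordered pairs, no multiple arcs) and a distinguished root vertex. -/
structure Net where
  verts : Finset ℕ
  arcs : Finset (ℕ × ℕ)
  root : ℕ

namespace Net

/-- The arc relation of `N`. -/
def ArcRel (N : Net) (u v : ℕ) : Prop := (u, v) ∈ N.arcs

/-- `v` is reachable from `u` by a directed path in `N`. -/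
def Reach (N : Net) (u v : ℕ) : Prop := Relation.ReflTransGen N.ArcRel u v

/-- The indegree of a vertex. -/
def indeg (N : Net) (v : ℕ) : ℕ := (N.arcs.filter fun a => a.2 = v).card

/-- The outdegree of a vertex. -/
def outdeg (N : Net) (v : ℕ) : ℕ := (N.arcs.filter fun a => a.1 = v).card

/-- A leaf is a vertex of indegree 1 and outdegree 0. -/
def IsLeaf (N : Net) (v : ℕ) : Prop := N.indeg v = 1 ∧ N.outdeg v = 0

/-- `N` is a phylogenetic network on the leaf set `X`: it is a rooted DAG
(no loops and no multiple arcs, a unique source, namely the root), its set of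
leaves is exactly `X`, every tree vertex (a non-root interior vertex of
indegree one) has outdegree at least 2, and every hybrid vertex (a vertex of
indegree at least 2) has outdegree at least 1. -/
def IsPhyloNet (N : Net) (X : Finset ℕ) : Prop :=
  (∀ a ∈ N.arcs, a.1 ∈ N.verts ∧ a.2 ∈ N.verts) ∧
  (∀ v : ℕ, ¬ Relation.TransGen N.ArcRel v v) ∧
  N.root ∈ N.verts ∧ N.indeg N.root = 0 ∧
  (∀ v ∈ N.verts, N.indeg v = 0 → v = N.root) ∧
  X ⊆ N.verts ∧ (∀ v ∈ N.verts, (N.IsLeaf v ↔ v ∈ X)) ∧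
  (∀ v ∈ N.verts, v ≠ N.root → N.outdeg v ≠ 0 → N.indeg v = 1 → 2 ≤ N.outdeg v) ∧
  (∀ v ∈ N.verts, 2 ≤ N.indeg v → 1 ≤ N.outdeg v)

/-- Adjacency in the (simple) underlying undirected graph of `N`. -/
def Adj (N : Net) (u v : ℕ) : Prop := (u, v) ∈ N.arcs ∨ (v, u) ∈ N.arcs

/-- `C` is (the vertex set of) a cycle in the underlying graph of `N`:
a set of `n ≥ 3` vertices that can be ordered cyclically so that consecutive
vertices are adjacent. -/
def IsCycle (N : Net) (C : Finset ℕ) : Prop :=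
  ∃ n : ℕ, ∃ hn : 3 ≤ n, ∃ f : Fin n → ℕ,
    Function.Injective f ∧ Finset.image f Finset.univ = C ∧
    ∀ i : Fin n, N.Adj (f i) (f ⟨(i.val + 1) % n, Nat.mod_lt _ (by omega)⟩)

/-- `N` is 1-nested: every pair of distinct cycles of the underlying graph
meets in at most one vertex. -/
def OneNested (N : Net) : Prop :=
  ∀ C₁ C₂ : Finset ℕ, N.IsCycle C₁ → N.IsCycle C₂ → C₁ ≠ C₂ → (C₁ ∩ C₂).card ≤ 1

/-- `p` is a (nonempty) directed path in `N`, recorded as its list of vertices. -/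
def IsPath (N : Net) (p : List ℕ) : Prop :=
  p ≠ [] ∧ List.Chain' N.ArcRel p ∧ ∀ u ∈ p, u ∈ N.verts

/-- `p` is a directed path in `N` from `u` to `v`. -/
def IsPathFromTo (N : Net) (u v : ℕ) (p : List ℕ) : Prop :=
  N.IsPath p ∧ p.head? = some u ∧ p.getLast? = some v

/-- `v` lies on every directed path in `N` from the root to every element of `Y`. -/
def OnAllRootPaths (N : Net) (Y : Finset ℕ) (v : ℕ) : Prop :=
  ∀ y ∈ Y, ∀ p : List ℕ, N.IsPathFromTo N.root y p → v ∈ p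

/-- `v = v(Y)`: the last vertex (w.r.t. the order induced by the arcs) not in `Y`
lying on every directed path from the root to every element of `Y`. -/
def IsLCA (N : Net) (Y : Finset ℕ) (v : ℕ) : Prop :=
  v ∈ N.verts ∧ v ∉ Y ∧ N.OnAllRootPaths Y v ∧
  ∀ w ∈ N.verts, w ∉ Y → N.OnAllRootPaths Y w → N.Reach w v

/-- `v = v*_N`: there exist distinct leaves `x, y ∈ X` with `v = v({x,y})`, and for every
pair of distinct leaves `u, w ∈ X`, either `v({u,w}) = v` or `v({u,w})` is
reachable from `v`. -/
def IsVStar (N : Net) (X : Finset ℕ) (v : ℕ) : Prop :=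
  (∃ x ∈ X, ∃ y ∈ X, x ≠ y ∧ N.IsLCA {x, y} v) ∧
  ∀ u ∈ X, ∀ w ∈ X, u ≠ w →
    ∀ t : ℕ, N.IsLCA {u, w} t → t = v ∨ N.Reach v t

/-- `N` is recoverable: the root equals `v*_N`. -/
def Recoverable (N : Net) (X : Finset ℕ) : Prop := N.IsVStar X N.root

/-- Connectivity (in the underlying graph) within the vertex set `S`. -/
def ConnOn (N : Net) (S : Finset ℕ) (a b : ℕ) : Prop :=
  Relation.ReflTransGen (fun u w => u ∈ S ∧ w ∈ S ∧ N.Adj u w) a b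

/-- `v` is a cut vertex of `N`: deleting `v` disconnects the underlying graph. -/
def IsCutVertex (N : Net) (v : ℕ) : Prop :=
  v ∈ N.verts ∧ ∃ a ∈ N.verts.erase v, ∃ b ∈ N.verts.erase v,
    ¬ N.ConnOn (N.verts.erase v) a b

/-- `v` is a separating vertex of `N` (w.r.t. leaf set `X`): a cut vertex such that
some connected component of `N` minus `v` contains no leaf. -/
def IsSepVertex (N : Net) (X : Finset ℕ) (v : ℕ) : Prop :=
  N.IsCutVertex v ∧ ∃ a ∈ N.verts.erase v,
    ∀ b ∈ N.verts.erase v, N.ConnOn (N.verts.erase v) a b → b ∉ X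

open scoped Classical in
/-- The subnetwork of `N` which is the union of all directed paths from `v`
to elements of `Y`, rooted at `v`. -/
def restrictTo (N : Net) (v : ℕ) (Y : Finset ℕ) : Net :=
  { verts := N.verts.filter fun w => N.Reach v w ∧ ∃ y ∈ Y, N.Reach w y
    arcs := N.arcs.filter fun a => N.Reach v a.1 ∧ ∃ y ∈ Y, N.Reach a.2 y
    root := v }

/-- One suppression step: suppress a vertex `w` of indegree 1 and outdegree 1
(its unique in-arc `(u,w)` and out-arc `(w,x)` are replaced by the arc `(u,x)`;
since arc sets are plain finite sets, any multiple arc arising this way is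
automatically merged). -/
def SuppStep (N M : Net) : Prop :=
  ∃ u w x : ℕ, (u, w) ∈ N.arcs ∧ (w, x) ∈ N.arcs ∧
    N.indeg w = 1 ∧ N.outdeg w = 1 ∧
    M.verts = N.verts.erase w ∧
    M.arcs = insert (u, x) ((N.arcs.erase (u, w)).erase (w, x)) ∧
    M.root = N.root

/-- `M` is the result of repeatedly suppressing indegree-1-outdegree-1 vertices
of `N` (merging multiple arcs) until none are left. -/
def Suppresses (N M : Net) : Prop :=
  Relation.ReflTransGen SuppStep N M ∧
  ∀ w ∈ M.verts, ¬ (M.indeg w = 1 ∧ M.outdeg w = 1)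

/-- Isomorphism of networks restricting to the identity on `X`. -/
def IsIsoOn (N M : Net) (X : Finset ℕ) : Prop :=
  ∃ f : ℕ → ℕ, Set.BijOn f ↑N.verts ↑M.verts ∧
    (∀ u ∈ N.verts, ∀ w ∈ N.verts, ((u, w) ∈ N.arcs ↔ (f u, f w) ∈ M.arcs)) ∧
    f N.root = M.root ∧ ∀ x ∈ X, f x = x

/-- `T` is (a copy, up to isomorphism fixing the leaves, of) the trinet `N_Y`
displayed by `N` on `Y`: take the union of all directed paths from `v(Y)` to the
elements of `Y` and repeatedly suppress indegree-1-outdegree-1 vertices and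
multiple arcs until a trinet on `Y` is obtained. -/
def Displays (N : Net) (Y : Finset ℕ) (T : Net) : Prop :=
  ∃ v : ℕ, N.IsLCA Y v ∧ ∃ T₀ : Net, Suppresses (N.restrictTo v Y) T₀ ∧ T₀.IsIsoOn T Y

/-- The arcs of `N` having both endpoints in `C`. -/
def arcsIn (N : Net) (C : Finset ℕ) : Finset (ℕ × ℕ) :=
  N.arcs.filter fun a => a.1 ∈ C ∧ a.2 ∈ C

/-- `Z(C)`: the vertices of `C` that are tails of two distinct arcs of `N` having
both endpoints in `C`. -/
def ZSet (N : Net) (C : Finset ℕ) : Finset ℕ :=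
  C.filter fun v => ∃ a ∈ N.arcsIn C, ∃ b ∈ N.arcsIn C, a ≠ b ∧ a.1 = v ∧ b.1 = v

/-- `h = h_C`: a vertex of `C` having two of its incoming arcs among the arcs of `N`
with both endpoints in `C`. -/
def IsHybridOfCycle (N : Net) (C : Finset ℕ) (h : ℕ) : Prop :=
  h ∈ C ∧ ∃ a ∈ N.arcsIn C, ∃ b ∈ N.arcsIn C, a ≠ b ∧ a.2 = h ∧ b.2 = h

/-- A tree vertex: an interior vertex of indegree 1 (interior: outdegree nonzero;
indegree 1 excludes the root). -/
def IsTreeVert (N : Net) (v : ℕ) : Prop := N.indeg v = 1 ∧ 1 ≤ N.outdeg v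

/-- `w = w(l)`: the vertex distinct from `l` lying on every directed path from the
root to `l` which is a hybrid vertex and from which there is a unique directed path
to `l` all of whose interior vertices are tree vertices. -/
def IsWVert (N : Net) (l w : ℕ) : Prop :=
  w ∈ N.verts ∧ w ≠ l ∧ (∀ p : List ℕ, N.IsPathFromTo N.root l p → w ∈ p) ∧
  2 ≤ N.indeg w ∧
  ∃! p : List ℕ, N.IsPathFromTo w l p ∧ ∀ u ∈ p, u ≠ w → u ≠ l → N.IsTreeVert u

/-- The underlying graph of `N` is a tree (connected and without cycles);
together with `IsPhyloNet` this says that `N` is a rooted phylogenetic tree. -/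
def IsTreeNet (N : Net) : Prop :=
  (∀ a ∈ N.verts, ∀ b ∈ N.verts, N.ConnOn N.verts a b) ∧
  ∀ C : Finset ℕ, ¬ N.IsCycle C

/-- `v = v_S` witnesses that `S` is a cherry of `N` on `X`: there is an arc from `v`
to every element of `S` and no arc from `v` to any element of `X - S`. -/
def IsCherryVert (N : Net) (X S : Finset ℕ) (v : ℕ) : Prop :=
  v ∈ N.verts ∧ (∀ x ∈ S, (v, x) ∈ N.arcs) ∧ ∀ x ∈ X, x ∉ S → (v, x) ∉ N.arcs

/-- `S` is a cherry of `N` on `X`. -/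
def IsCherry (N : Net) (X S : Finset ℕ) : Prop :=
  2 ≤ S.card ∧ S ⊆ X ∧ ∃ v : ℕ, N.IsCherryVert X S v

/-- `S` is an isolated cherry of `N` on `X`. -/
def IsIsolatedCherry (N : Net) (X S : Finset ℕ) : Prop :=
  2 ≤ S.card ∧ S ⊆ X ∧
  ∃ v : ℕ, N.IsCherryVert X S v ∧ N.outdeg v = S.card ∧ N.indeg v = 1

/-- `(A : B : z)` is a cactus of `N` on `X` with split vertex `vH`, end vertex `h`,
and cycle interior vertices `P` (carrying the pendant leaves `A` in order) and `Q`
(carrying the pendant leaves `B` in order). -/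
def IsCactusData (N : Net) (X : Finset ℕ) (A B : List ℕ) (z vH h : ℕ)
    (P Q : List ℕ) : Prop :=
  A ≠ [] ∧ (A ++ B ++ [z]).Nodup ∧ (∀ x ∈ A ++ B ++ [z], x ∈ X) ∧
  P.length = A.length ∧ Q.length = B.length ∧
  List.Chain' N.ArcRel (vH :: (P ++ [h])) ∧
  List.Chain' N.ArcRel (vH :: (Q ++ [h])) ∧
  (vH :: h :: (P ++ Q)).Nodup ∧
  (∀ u ∈ vH :: h :: (P ++ Q), u ∈ N.verts) ∧
  N.outdeg h = 1 ∧ (h, z) ∈ N.arcs ∧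
  (∀ pr ∈ P.zip A, (pr.1, pr.2) ∈ N.arcs) ∧
  (∀ pr ∈ Q.zip B, (pr.1, pr.2) ∈ N.arcs) ∧
  (∀ u ∈ P ++ Q, N.indeg u = 1 ∧ N.outdeg u = 2)

/-- `(A : B : z)` is a cactus of `N` on `X` with split vertex `vH` and end vertex `h`. -/
def IsCactus (N : Net) (X : Finset ℕ) (A B : List ℕ) (z vH h : ℕ) : Prop :=
  ∃ P Q : List ℕ, N.IsCactusData X A B z vH h P Q

/-- The support of a cactus `(A : B : z)`. -/
def cactusSupport (A B : List ℕ) (z : ℕ) : Finset ℕ := (A ++ B ++ [z]).toFinset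

/-- The split vertex condition making a cactus isolated. -/
def IsIsolatedAt (N : Net) (vH : ℕ) : Prop := N.indeg vH = 1 ∧ N.outdeg vH = 2

/-- Renaming: `rn a b` maps `a` to `b` and fixes everything else. -/
def rn (a b u : ℕ) : ℕ := if u = a then b else u

/-- Cherry reduction `C_{z:S}`: remove all leaves in `S` except `z`,
together with their incident arcs. -/
def cherryRed (N : Net) (S : Finset ℕ) (z : ℕ) : Net :=
  { verts := N.verts \ S.erase z
    arcs := N.arcs.filter fun a => a.1 ∉ S.erase z ∧ a.2 ∉ S.erase z
    root := N.root }

/-- Isolated cherry reduction `C̄_{z:S}` (for the cherry at `vS`): remove all leaves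
in `S` together with their incident arcs and relabel `vS` as the leaf `z`. -/
def isoCherryRed (N : Net) (S : Finset ℕ) (z vS : ℕ) : Net :=
  { verts := (N.verts \ S).image (rn vS z)
    arcs := (N.arcs.filter fun a => a.1 ∉ S ∧ a.2 ∉ S).image
      fun a => (rn vS z a.1, rn vS z a.2)
    root := rn vS z N.root }

/-- Cactus reduction `H_{z:S}`: here `D = C_H - {v_H}`; remove the vertices in
`D ∪ (S - {z})` together with all arcs meeting them (this includes the two outgoing
cycle arcs of `v_H`) and add the new arc `(v_H, z)`. -/
def cactusRed (N : Net) (D S : Finset ℕ) (z vH : ℕ) : Net :=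
  { verts := N.verts \ (D ∪ S.erase z)
    arcs := insert (vH, z)
      (N.arcs.filter fun a => a.1 ∉ D ∪ S.erase z ∧ a.2 ∉ D ∪ S.erase z)
    root := N.root }

/-- Isolated cactus reduction `H̄_{z:S}`: here `D = C_H - {v_H}`; remove the vertices
in `D ∪ (S - {z})` together with all arcs meeting them (this includes the two outgoing
arcs of `v_H`) and replace `v_H` by `z`. -/
def isoCactusRed (N : Net) (D S : Finset ℕ) (z vH : ℕ) : Net :=
  { verts := (N.verts \ (D ∪ S.erase z)).image (rn vH z)
    arcs := (N.arcs.filter fun a => a.1 ∉ D ∪ S.erase z ∧ a.2 ∉ D ∪ S.erase z).image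
      fun a => (rn vH z a.1, rn vH z a.2)
    root := rn vH z N.root }

/-- The four kinds of reductions. -/
inductive RedKind : Type
  | cherry | isoCherry | cactus | isoCactus

/-- `M` is the result of applying the reduction `R_{z:S}` of kind `k` to `N`
(in particular the corresponding cherry/cactus structure is present in `N`). -/
def IsReductionOf (k : RedKind) (N : Net) (X S : Finset ℕ) (z : ℕ) (M : Net) : Prop :=
  match k with
  | .cherry => z ∈ S ∧ N.IsCherry X S ∧ ¬ N.IsIsolatedCherry X S ∧ M = N.cherryRed S z
  | .isoCherry => z ∈ S ∧ 2 ≤ S.card ∧ S ⊆ X ∧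
      ∃ vS : ℕ, N.IsCherryVert X S vS ∧ N.outdeg vS = S.card ∧ N.indeg vS = 1 ∧
        M = N.isoCherryRed S z vS
  | .cactus => ∃ A B : List ℕ, ∃ vH h : ℕ, ∃ P Q : List ℕ,
      N.IsCactusData X A B z vH h P Q ∧ S = cactusSupport A B z ∧
      ¬ N.IsIsolatedAt vH ∧ M = N.cactusRed (insert h (P ++ Q).toFinset) S z vH
  | .isoCactus => ∃ A B : List ℕ, ∃ vH h : ℕ, ∃ P Q : List ℕ,
      N.IsCactusData X A B z vH h P Q ∧ S = cactusSupport A B z ∧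
      N.IsIsolatedAt vH ∧ M = N.isoCactusRed (insert h (P ++ Q).toFinset) S z vH

/-- Cherry expansion `C⁻¹_{z:S}`: replace the leaf `z` by a new vertex `v` and add
new arcs `(v, s)` for all `s ∈ S` (recall `z ∈ S`). -/
def cherryExp (N : Net) (S : Finset ℕ) (z v : ℕ) : Net :=
  { verts := N.verts.image (rn z v) ∪ S
    arcs := (N.arcs.image fun a => (rn z v a.1, rn z v a.2)) ∪ S.image fun s => (v, s)
    root := rn z v N.root }


variable {N M : Net} {X : Finset ℕ} {u v w x y z : ℕ}

lemma outArcs_def (N : Net) (v : ℕ) : N.outdeg v = (N.arcs.filter fun a => a.1 = v).card := rfl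
lemma inArcs_def (N : Net) (v : ℕ) : N.indeg v = (N.arcs.filter fun a => a.2 = v).card := rfl

lemma no_out_of_outdeg_zero (h : N.outdeg v = 0) (hx : (v, x) ∈ N.arcs) : False := by
  have : (v, x) ∈ N.arcs.filter fun a => a.1 = v := by simp [hx]
  rw [outArcs_def, Finset.card_eq_zero] at h
  simp [h] at this

lemma outdeg_pos (hx : (v, x) ∈ N.arcs) : 0 < N.outdeg v := by
  rcases Nat.eq_zero_or_pos (N.outdeg v) with h | h
  · exact absurd hx (fun hx => no_out_of_outdeg_zero h hx)
  · exact h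

lemma indeg_pos (hx : (u, v) ∈ N.arcs) : 0 < N.indeg v := by
  apply Finset.card_pos.mpr
  exact ⟨(u, v), by simp [hx]⟩

lemma indeg_one_unique (h : N.indeg v = 1) (h1 : (u, v) ∈ N.arcs) (h2 : (w, v) ∈ N.arcs) :
    u = w := by
  have hu : (u, v) ∈ N.arcs.filter fun a => a.2 = v := by simp [h1]
  have hw : (w, v) ∈ N.arcs.filter fun a => a.2 = v := by simp [h2]
  rw [inArcs_def, Finset.card_eq_one] at h
  obtain ⟨a, ha⟩ := h
  rw [ha] at hu hw
  simp at hu hw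
  rw [← hw] at hu
  exact (Prod.mk.injEq _ _ _ _).mp hu |>.1

lemma two_le_outdeg (hx : (v, x) ∈ N.arcs) (hy : (v, y) ∈ N.arcs) (hxy : x ≠ y) :
    2 ≤ N.outdeg v := by
  have : ({(v, x), (v, y)} : Finset (ℕ × ℕ)) ⊆ N.arcs.filter fun a => a.1 = v := by
    intro a ha
    simp at ha
    rcases ha with h | h <;> simp [h, hx, hy]
  calc 2 = ({(v, x), (v, y)} : Finset (ℕ × ℕ)).card := by
            rw [Finset.card_insert_of_notMem (by simp [hxy]), Finset.card_singleton]
    _ ≤ _ := Finset.card_le_card this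
  
lemma outdeg_two_cases (h : N.outdeg v = 2) (hx : (v, x) ∈ N.arcs) (hy : (v, y) ∈ N.arcs)
    (hxy : x ≠ y) (hw : (v, w) ∈ N.arcs) : w = x ∨ w = y := by
  have hsub : ({(v, x), (v, y)} : Finset (ℕ × ℕ)) ⊆ N.arcs.filter fun a => a.1 = v := by
    intro a ha
    simp at ha
    rcases ha with h | h <;> simp [h, hx, hy]
  have hcard : (N.arcs.filter fun a => a.1 = v).card ≤ ({(v, x), (v, y)} : Finset (ℕ × ℕ)).card := by
    rw [Finset.card_insert_of_notMem (by simp [hxy]), Finset.card_singleton]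
    rw [outArcs_def] at h
    omega
  have := Finset.eq_of_subset_of_card_le hsub hcard
  have hwmem : (v, w) ∈ ({(v, x), (v, y)} : Finset (ℕ × ℕ)) := by
    rw [this]; simp [hw]
  simp at hwmem
  tauto

/-- In a chain from `a`, every later element is `TransGen`-reachable. -/
lemma chain'_transGen {α : Type*} {r : α → α → Prop} :
    ∀ {l : List α} {a b : α}, List.Chain' r (a :: l) → b ∈ l → Relation.TransGen r a b := by
  intro l
  induction l with
  | nil => intro a b _ hb; simp at hb
  | cons c t ih =>
    intro a b hch hb
    have hac : r a c := (List.isChain_cons_cons.mp hch).1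
    have hct : List.Chain' r (c :: t) := (List.isChain_cons_cons.mp hch).2
    rcases List.mem_cons.mp hb with rfl | hb
    · exact Relation.TransGen.single hac
    · exact (Relation.TransGen.single hac).trans (ih hct hb)

lemma chain'_nodup (hac : ∀ v : ℕ, ¬ Relation.TransGen N.ArcRel v v) :
    ∀ {l : List ℕ}, List.Chain' N.ArcRel l → l.Nodup := by
  intro l
  induction l with
  | nil => simp
  | cons a t ih =>
    intro hch
    rw [List.nodup_cons]
    refine ⟨fun ha => hac a (chain'_transGen hch ha), ih hch.tail⟩

lemma getLast_eq' {α : Type*} {l : List α} {a : α} (hne : l ≠ []) (h : l.getLast? = some a) :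
    l.getLast hne = a := by
  rw [List.getLast?_eq_getLast (l := l) hne] at h
  exact Option.some.inj h

lemma head_eq' {α : Type*} {l : List α} {a : α} (hne : l ≠ []) (h : l.head? = some a) :
    l.head hne = a := by
  rw [List.head?_eq_head hne] at h
  exact Option.some.inj h

/-- Build an `IsCycle` from a cyclically-adjacent nodup list. -/
lemma isCycle_of_list {L : List ℕ} (hnd : L.Nodup) (hlen : 3 ≤ L.length)
    (hch : List.Chain' N.Adj L)
    (hwrap : ∀ hne : L ≠ [], N.Adj (L.getLast hne) (L.head hne)) :
    N.IsCycle L.toFinset := by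
  have hne : L ≠ [] := by
    intro h; rw [h] at hlen; simp at hlen
  refine ⟨L.length, hlen, L.get, List.nodup_iff_injective_get.mp hnd, ?_, ?_⟩
  · ext a
    simp only [Finset.mem_image, Finset.mem_univ, true_and, List.mem_toFinset]
    constructor
    · rintro ⟨i, hi⟩
      exact hi ▸ List.get_mem L i
    · exact fun h => List.mem_iff_get.mp h
  · intro i
    by_cases hi : i.val + 1 < L.length
    · have h1 : (i.val + 1) % L.length = i.val + 1 := Nat.mod_eq_of_lt hi
      have := List.isChain_iff_getElem.mp hch i.val (by omega)
      convert this using 2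
      all_goals simp [h1]
    · have hi2 : i.val = L.length - 1 := by omega
      have h1 : (i.val + 1) % L.length = 0 := by
        have : i.val + 1 = L.length := by omega
        simp [this]
      have hw := hwrap hne
      rw [List.getLast_eq_getElem] at hw
      have hh : L.head hne = L.get ⟨0, by omega⟩ := by
        cases L with
        | nil => exact absurd rfl hne
        | cons a t => rfl
      rw [hh] at hw
      convert hw using 2 <;>
        first
          | exact Fin.ext h1
          | simp [hi2]

lemma arcRel_adj (h : N.ArcRel u v) : N.Adj u v := Or.inl h

/-- Two internally disjoint directed paths from `c` to `b` give a cycle. -/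
lemma isCycle_two_paths {c b : ℕ} {t s : List ℕ}
    (hct : List.Chain' N.ArcRel (c :: (t ++ [b])))
    (hcs : List.Chain' N.ArcRel (c :: (s ++ [b])))
    (hcb : c ≠ b) (hbt : b ∉ t) (hbs : b ∉ s) (hctm : c ∉ t) (hcsm : c ∉ s)
    (hnt : t.Nodup) (hns : s.Nodup) (hdisj : ∀ x ∈ t, x ∉ s) (hne : t ≠ [] ∨ s ≠ []) :
    N.IsCycle (c :: b :: (t ++ s)).toFinset := by
  classical
  have hLfin : ((c :: (t ++ [b])) ++ s.reverse).toFinset = (c :: b :: (t ++ s)).toFinset := by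
    ext a
    simp only [List.toFinset_append, List.toFinset_cons, List.mem_toFinset, Finset.mem_union,
      Finset.mem_insert, List.mem_toFinset, List.toFinset_reverse, List.toFinset_append,
      Finset.mem_union, List.mem_toFinset, List.toFinset_cons, Finset.mem_insert]
    constructor
    · rintro (h | h) <;> simp_all <;> tauto
    · intro h; simp_all <;> tauto
  rw [← hLfin]
  have hctA : List.Chain' N.Adj (c :: (t ++ [b])) := hct.imp (fun _ _ => arcRel_adj)
  have hcsA : List.Chain' N.Adj (c :: (s ++ [b])) := hcs.imp (fun _ _ => arcRel_adj)
  have hsA : List.Chain' N.Adj (s ++ [b]) := hcsA.tail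
  have hsA2 : List.Chain' N.Adj s := (List.isChain_append.mp hsA).1
  have hsrev : List.Chain' N.Adj s.reverse := by
    refine List.isChain_reverse.mpr ?_
    exact hsA2.imp (fun a b hab => hab.symm)
  have hgl1 : (c :: (t ++ [b])).getLast? = some b := by
    have : c :: (t ++ [b]) = (c :: t) ++ [b] := by simp
    rw [this, List.getLast?_concat]
  have hlink : ∀ x ∈ (c :: (t ++ [b])).getLast?, ∀ y ∈ s.reverse.head?, N.Adj x y := by
    intro x hx y hy
    rw [hgl1] at hx
    have hxb : x = b := by
      have : b = x := by simpa using hx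
      exact this.symm
    rw [List.head?_reverse] at hy
    have hsnil : s ≠ [] := by
      intro h0; rw [h0] at hy; simp at hy
    have hys : y = s.getLast hsnil := by
      rw [List.getLast?_eq_getLast (l := s) hsnil] at hy
      have := hy
      simp only [Option.mem_def, Option.some.injEq] at this
      exact this.symm
    have harc : N.ArcRel y b := by
      have h2 : List.Chain' N.ArcRel ((c :: s) ++ [b]) := by simpa using hcs
      have h3 := (List.isChain_append.mp h2).2.2
      apply h3
      · rw [List.getLast?_eq_getLast (l := (c :: s)) (by simp), List.getLast_cons hsnil, ← hys]
        simp
      · simp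
    rw [hxb]
    exact (arcRel_adj harc).symm
  have hchA : List.Chain' N.Adj ((c :: (t ++ [b])) ++ s.reverse) := by
    refine List.isChain_append.mpr ?_
    exact ⟨hctA, hsrev, hlink⟩
  have hnd1 : (t ++ [b]).Nodup := by
    rw [List.nodup_append']
    exact ⟨hnt, List.nodup_singleton b, fun a ha hb => by
      simp at hb; rw [hb] at ha; exact hbt ha⟩
  have hnd2 : (c :: (t ++ [b])).Nodup := by
    rw [List.nodup_cons]
    refine ⟨?_, hnd1⟩
    intro hc
    rcases List.mem_append.mp hc with h1 | h1
    · exact hctm h1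
    · simp at h1; exact hcb h1
  have hnd : ((c :: (t ++ [b])) ++ s.reverse).Nodup := by
    rw [List.nodup_append']
    refine ⟨hnd2, by simpa using hns, ?_⟩
    intro a ha
    rw [List.mem_reverse]
    rcases List.mem_cons.mp ha with rfl | h1
    · exact hcsm
    · rcases List.mem_append.mp h1 with h2 | h2
      · exact hdisj a h2
      · simp at h2; rw [h2]; exact hbs
  have hlen : 3 ≤ ((c :: (t ++ [b])) ++ s.reverse).length := by
    simp only [List.length_append, List.length_cons, List.length_reverse, List.length_append,
      List.length_singleton]
    rcases hne with h1 | h1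
    · have := List.length_pos_iff.mpr h1; omega
    · have := List.length_pos_iff.mpr h1; omega
  apply isCycle_of_list hnd hlen hchA
  intro hne2
  have hhead : ((c :: (t ++ [b])) ++ s.reverse).head hne2 = c := head_eq' hne2 rfl
  rw [hhead]
  by_cases hs0 : s = []
  · subst hs0
    have hgl : ((c :: (t ++ [b])) ++ ([] : List ℕ).reverse).getLast hne2 = b := by
      apply getLast_eq' hne2
      simpa using hgl1
    rw [hgl]
    have : N.ArcRel c b := by
      have := List.isChain_cons_cons.mp hcs
      simpa using this.1
    exact (arcRel_adj this).symm
  · have hgl : ((c :: (t ++ [b])) ++ s.reverse).getLast hne2 = s.head hs0 := by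
      apply getLast_eq' hne2
      rw [List.getLast?_append]
      have : s.reverse.getLast? = some (s.head hs0) := by
        have h1 : s.reverse.getLast? = s.reverse.reverse.head? := by
          rw [List.head?_reverse]
        rw [h1, List.reverse_reverse, List.head?_eq_head hs0]
      rw [this]; rfl
    rw [hgl]
    have : N.ArcRel c (s.head hs0) := by
      cases s with
      | nil => exact absurd rfl hs0
      | cons a as =>
        have h1 := (List.isChain_cons_cons.mp hcs).1
        simpa using h1
    exact (arcRel_adj this).symm

lemma reach_of_transGen (h : Relation.TransGen N.ArcRel u v) : N.Reach u v :=
  h.to_reflTransGen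

lemma transGen_of_reach_ne (h : N.Reach u v) (hne : u ≠ v) :
    Relation.TransGen N.ArcRel u v := by
  rcases Relation.reflTransGen_iff_eq_or_transGen.mp h with h1 | h1
  · exact absurd h1.symm hne
  · exact h1

/-- In a phylogenetic network every vertex is reachable from the root. -/
lemma reach_root (hphy : N.IsPhyloNet X) : ∀ v ∈ N.verts, N.Reach N.root v := by
  classical
  obtain ⟨harc, hac, hroot, hrind, huniq, -⟩ := hphy
  have key : ∀ n : ℕ, ∀ v ∈ N.verts,
      (N.verts.filter fun u => N.Reach u v).card ≤ n → N.Reach N.root v := by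
    intro n
    induction n with
    | zero =>
      intro v hv hc
      exfalso
      have hm : v ∈ N.verts.filter fun u => N.Reach u v := by
        simp only [Finset.mem_filter]
        exact ⟨hv, Relation.ReflTransGen.refl⟩
      have := Finset.card_pos.mpr ⟨v, hm⟩
      omega
    | succ n ih =>
      intro v hv hc
      by_cases hvr : v = N.root
      · rw [hvr]
        exact Relation.ReflTransGen.refl
      · have hind : N.indeg v ≠ 0 := fun h => hvr (huniq v hv h)
        have hne : (N.arcs.filter fun a => a.2 = v).Nonempty := by
          rw [← Finset.card_pos, ← inArcs_def]
          omega
        obtain ⟨a, ha⟩ := hne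
        simp only [Finset.mem_filter] at ha
        have harcuv : (a.1, v) ∈ N.arcs := by
          rw [← ha.2]; exact ha.1
        have hu : a.1 ∈ N.verts := (harc _ harcuv).1
        have hnotvu : ¬ N.Reach v a.1 := by
          intro hr
          exact hac v ((transGen_of_reach_ne hr (by
            intro h0
            exact hac v (Relation.TransGen.single (by rw [← h0] at harcuv; exact harcuv))
            )).tail harcuv)
        have hsub : (N.verts.filter fun w => N.Reach w a.1) ⊆
            N.verts.filter fun w => N.Reach w v := by
          intro w hw
          simp only [Finset.mem_filter] at hw ⊢
          exact ⟨hw.1, hw.2.tail harcuv⟩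
        have hvm : v ∈ N.verts.filter fun w => N.Reach w v := by
          simp only [Finset.mem_filter]
          exact ⟨hv, Relation.ReflTransGen.refl⟩
        have hvnm : v ∉ N.verts.filter fun w => N.Reach w a.1 := by
          simp only [Finset.mem_filter, not_and]
          exact fun _ => hnotvu
        have hlt : (N.verts.filter fun w => N.Reach w a.1).card <
            (N.verts.filter fun w => N.Reach w v).card :=
          Finset.card_lt_card (Finset.ssubset_iff_of_subset hsub |>.mpr ⟨v, hvm, hvnm⟩)
        exact (ih a.1 hu (by omega)).tail harcuv
  intro v hv
  exact key _ v hv le_rfl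

/-- Extract an explicit chain from reachability. -/
lemma exists_chain_of_reach (h : N.Reach u v) :
    ∃ p : List ℕ, List.Chain' N.ArcRel (u :: p) ∧ (u :: p).getLast? = some v := by
  induction h with
  | refl => exact ⟨[], List.isChain_singleton u, rfl⟩
  | @tail b c hr harc ih =>
    obtain ⟨p, hch, hl⟩ := ih
    refine ⟨p ++ [c], ?_, ?_⟩
    · have : (u :: (p ++ [c])) = (u :: p) ++ [c] := by simp
      rw [this]; refine List.isChain_append.mpr ?_
      refine ⟨hch, List.isChain_singleton c, ?_⟩
      intro x hx y hy
      rw [hl] at hx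
      simp only [Option.mem_def, Option.some.injEq] at hx
      simp only [List.head?_cons, Option.mem_def, Option.some.injEq] at hy
      rw [← hx, ← hy]
      exact harc
    · have : (u :: (p ++ [c])) = (u :: p) ++ [c] := by simp
      rw [this, List.getLast?_concat]

/-- Split a list at the last element satisfying a predicate. -/
lemma split_last {α : Type*} (Pred : α → Prop) [DecidablePred Pred] :
    ∀ (l : List α), (∃ x ∈ l, Pred x) →
      ∃ pre c post, l = pre ++ c :: post ∧ Pred c ∧ ∀ x ∈ post, ¬ Pred x := by
  intro l
  induction l with
  | nil => simp
  | cons a tl ih =>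
    intro hex
    by_cases htl : ∃ x ∈ tl, Pred x
    · obtain ⟨pre, c, post, heq, hc, hpost⟩ := ih htl
      exact ⟨a :: pre, c, post, by rw [heq]; rfl, hc, hpost⟩
    · have ha : Pred a := by
        obtain ⟨x, hx, hpx⟩ := hex
        rcases List.mem_cons.mp hx with rfl | hx
        · exact hpx
        · exact absurd ⟨x, hx, hpx⟩ htl
      exact ⟨[], a, tl, rfl, ha, fun x hx hpx => htl ⟨x, hx, hpx⟩⟩

lemma chain_last_arc {α : Type*} {r : α → α → Prop} {l : List α} {e u : α}
    (hch : List.Chain' r (l ++ [e])) (hu : l.getLast? = some u) : r u e := by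
  have h3 := (List.isChain_append.mp hch).2.2
  apply h3
  · rw [hu]; rfl
  · simp

lemma chain_next {α : Type*} {r : α → α → Prop} :
    ∀ {l : List α} {e u : α}, List.Chain' r (l ++ [e]) → u ∈ l →
      l.getLast? ≠ some u → ∃ nxt ∈ l, r u nxt := by
  intro l
  induction l with
  | nil => intro e u _ hu; simp at hu
  | cons a t ih =>
    intro e u hch hu hlast
    cases t with
    | nil =>
      simp at hu
      rw [hu] at hlast
      simp at hlast
    | cons b t' =>
      rcases List.mem_cons.mp hu with rfl | hu2
      · refine ⟨b, by simp, ?_⟩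
        have : List.Chain' r (u :: ((b :: t') ++ [e])) := hch
        exact (List.isChain_cons_cons.mp this).1
      · have hch2 : List.Chain' r ((b :: t') ++ [e]) := by
          have : List.Chain' r (a :: ((b :: t') ++ [e])) := hch
          exact this.tail
        have hlast2 : (b :: t').getLast? ≠ some u := by
          rwa [List.getLast?_cons_cons] at hlast
        obtain ⟨nxt, hn1, hn2⟩ := ih hch2 hu2 hlast2
        exact ⟨nxt, by simp [hn1], hn2⟩

lemma chain_pred {α : Type*} {r : α → α → Prop} :
    ∀ {l : List α} {a u : α}, List.Chain' r (a :: l) → u ∈ l →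
      ∃ pr, r pr u ∧ (pr = a ∨ pr ∈ l) := by
  intro l
  induction l with
  | nil => intro a u _ hu; simp at hu
  | cons b t ih =>
    intro a u hch hu
    rcases List.mem_cons.mp hu with rfl | hu2
    · exact ⟨a, (List.isChain_cons_cons.mp hch).1, Or.inl rfl⟩
    · obtain ⟨pr, hp1, hp2⟩ := ih (List.isChain_cons_cons.mp hch).2 hu2
      rcases hp2 with rfl | hp3
      · exact ⟨pr, hp1, Or.inr (by simp)⟩
      · exact ⟨pr, hp1, Or.inr (by simp [hp3])⟩

lemma chain_pred_of_ne_head {α : Type*} {r : α → α → Prop} :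
    ∀ {l : List α} {a u : α}, List.Chain' r (a :: l) → u ∈ l →
      l.head? ≠ some u → ∃ pr ∈ l, r pr u := by
  intro l
  induction l with
  | nil => intro a u _ hu; simp at hu
  | cons b t ih =>
    intro a u hch hu hhead
    rcases List.mem_cons.mp hu with rfl | hu2
    · simp at hhead
    · have hcbt : List.Chain' r (b :: t) := (List.isChain_cons_cons.mp hch).2
      by_cases hth : t.head? = some u
      · refine ⟨b, by simp, ?_⟩
        cases t with
        | nil => simp at hth
        | cons c t' =>
          simp only [List.head?_cons, Option.some.injEq] at hth
          rw [← hth]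
          exact (List.isChain_cons_cons.mp hcbt).1
      · obtain ⟨pr, hp1, hp2⟩ := ih hcbt hu2 hth
        exact ⟨pr, by simp [hp1], hp2⟩

lemma transGen_of_chain_split {l pre post : List ℕ} {c x : ℕ}
    (hch : List.Chain' N.ArcRel l) (heq : l = pre ++ c :: post) (hx : x ∈ post) :
    Relation.TransGen N.ArcRel c x := by
  have hsuf : List.Chain' N.ArcRel (c :: post) := hch.suffix (heq ▸ ⟨pre, rfl⟩)
  exact chain'_transGen hsuf hx

lemma leaf_of_mem_X (hphy : N.IsPhyloNet X) (hx : x ∈ X) : N.IsLeaf x :=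
  (hphy.2.2.2.2.2.2.1 x (hphy.2.2.2.2.2.1 hx)).mpr hx

lemma tail_not_mem_X (hphy : N.IsPhyloNet X) (ha : (v, x) ∈ N.arcs) : v ∉ X := by
  intro hv
  exact no_out_of_outdeg_zero (leaf_of_mem_X hphy hv).2 ha

lemma two_le_card_inter {C₁ C₂ : Finset ℕ} (hab : u ≠ v)
    (h1 : u ∈ C₁) (h2 : u ∈ C₂) (h3 : v ∈ C₁) (h4 : v ∈ C₂) : 2 ≤ (C₁ ∩ C₂).card := by
  have hsub : ({u, v} : Finset ℕ) ⊆ C₁ ∩ C₂ := by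
    intro a ha
    simp at ha
    rcases ha with rfl | rfl <;> simp [h1, h2, h3, h4]
  calc 2 = ({u, v} : Finset ℕ).card := (Finset.card_pair hab).symm
    _ ≤ _ := Finset.card_le_card hsub

lemma mem_zip_of_mem_left {P A : List ℕ} (hlen : P.length = A.length) {u : ℕ} (hu : u ∈ P) :
    ∃ a ∈ A, (u, a) ∈ P.zip A := by
  obtain ⟨i, hi⟩ := List.mem_iff_get.mp hu
  refine ⟨A.get ⟨i.val, by omega⟩, List.get_mem _ _, ?_⟩
  have hz : (P.zip A).get ⟨i.val, by simp [List.length_zip]; omega⟩ =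
      (P.get ⟨i.val, i.isLt⟩, A.get ⟨i.val, by omega⟩) := by
    simp [List.getElem_zip]
  rw [← hi, List.mem_iff_get]
  exact ⟨_, hz⟩

/-- The tails of the incoming arcs of the end vertex `h` of a cactus are exactly the
two last interior vertices of the two directed paths of the cycle. -/
lemma cactus_parents {A B P Q : List ℕ} {vH h : ℕ}
    (hphy : N.IsPhyloNet X) (hnest : N.OneNested)
    (hcd : N.IsCactusData X A B z vH h P Q) :
    ∃ lp ls : ℕ, P.getLast? = some lp ∧ (vH :: Q).getLast? = some ls ∧ lp ≠ ls ∧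
      (lp, h) ∈ N.arcs ∧ (ls, h) ∈ N.arcs ∧
      ∀ u, (u, h) ∈ N.arcs → u = lp ∨ u = ls := by
  classical
  obtain ⟨hA, hndX, hXmem, hPA, hQB, hchP, hchQ, hndV, hvmem, houth, harczh, hzipP, hzipQ, hdeg⟩
    := hcd
  have harc := hphy.1
  have hac := hphy.2.1
  -- basic nonemptiness
  have hPne : P ≠ [] := by
    intro h0
    rw [h0] at hPA
    exact hA (List.length_eq_zero_iff.mp hPA.symm)
  -- nodup components
  have hndV1 := List.nodup_cons.mp hndV
  have hndV2 := List.nodup_cons.mp hndV1.2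
  have hvh_ne : vH ≠ h := by
    intro h0; exact hndV1.1 (by simp [h0])
  have hvH_nP : vH ∉ P := fun h0 => hndV1.1 (by simp [h0])
  have hvH_nQ : vH ∉ Q := fun h0 => hndV1.1 (by simp [h0])
  have hh_nP : h ∉ P := fun h0 => hndV2.1 (by simp [h0])
  have hh_nQ : h ∉ Q := fun h0 => hndV2.1 (by simp [h0])
  have hndPQ : (P ++ Q).Nodup := hndV2.2
  have hPnd : P.Nodup := (List.nodup_append'.mp hndPQ).1
  have hQnd : Q.Nodup := (List.nodup_append'.mp hndPQ).2.1
  have hdisjPQ : ∀ x ∈ P, x ∉ Q := (List.nodup_append'.mp hndPQ).2.2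
  -- last vertices
  set lp := P.getLast hPne with hlp
  have hlp? : P.getLast? = some lp := List.getLast?_eq_getLast (l := P) hPne
  set ls := (vH :: Q).getLast (List.cons_ne_nil _ _) with hls
  have hls? : (vH :: Q).getLast? = some ls := List.getLast?_eq_getLast _
  have hlpP : lp ∈ P := List.getLast_mem hPne
  have hlsQ : ls = vH ∨ ls ∈ Q := by
    have := List.getLast_mem (List.cons_ne_nil vH Q)
    rw [← hls] at this
    simpa using this
  have hlp_ne_ls : lp ≠ ls := by
    rcases hlsQ with h0 | h0
    · intro h1; rw [h1, h0] at hlpP; exact hvH_nP hlpP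
    · intro h1; rw [h1] at hlpP; exact hdisjPQ ls hlpP h0
  -- arcs into h
  have hchP' : List.Chain' N.ArcRel ((vH :: P) ++ [h]) := by simpa using hchP
  have hchQ' : List.Chain' N.ArcRel ((vH :: Q) ++ [h]) := by simpa using hchQ
  have hvP_last : (vH :: P).getLast? = some lp := by
    rw [List.getLast?_eq_getLast (List.cons_ne_nil _ _), List.getLast_cons hPne]
  have harclph : (lp, h) ∈ N.arcs := chain_last_arc hchP' hvP_last
  have harclsh : (ls, h) ∈ N.arcs := chain_last_arc hchQ' hls?
  -- not-in-X facts
  have hh_nX : h ∉ X := tail_not_mem_X hphy harczh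
  have hPQ_nX : ∀ u ∈ P ++ Q, u ∉ X := by
    intro u hu hX
    have h1 := (leaf_of_mem_X hphy hX).2
    have h2 := (hdeg u hu).2
    omega
  have hA_X : ∀ a ∈ A, a ∈ X := fun a ha => hXmem a (by simp [ha])
  have hB_X : ∀ b ∈ B, b ∈ X := fun b hb => hXmem b (by simp [hb])
  have hvH_verts : vH ∈ N.verts := hvmem vH (by simp)
  have harcvHp : N.ArcRel vH (P.head hPne) := by
    cases P with
    | nil => exact absurd rfl hPne
    | cons p0 P' => exact (List.isChain_cons_cons.mp hchP).1
  refine ⟨lp, ls, hlp?, hls?, hlp_ne_ls, harclph, harclsh, ?_⟩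
  intro u harcuh
  by_contra hcon
  push_neg at hcon
  obtain ⟨hu_lp, hu_ls⟩ := hcon
  -- u ≠ h
  have hu_ne_h : u ≠ h := by
    intro h0; rw [h0] at harcuh
    exact hac h (Relation.TransGen.single harcuh)
  -- u ∉ P
  have hu_nP : u ∉ P := by
    intro huP
    have hlast : P.getLast? ≠ some u := by
      rw [hlp?]; intro h0; exact hu_lp (Option.some.inj h0).symm
    obtain ⟨nxt, hn1, hn2⟩ := chain_next hchP.tail huP hlast
    obtain ⟨a, ha1, ha2⟩ := mem_zip_of_mem_left hPA huP
    have harcua : (u, a) ∈ N.arcs := hzipP _ ha2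
    have hna : nxt ≠ a := by
      intro h0
      exact hPQ_nX nxt (by simp [hn1]) (h0 ▸ hA_X a ha1)
    have hdu := (hdeg u (by simp [huP])).2
    rcases outdeg_two_cases hdu hn2 harcua hna harcuh with h0 | h0
    · exact hh_nP (h0 ▸ hn1)
    · exact hh_nX (h0 ▸ hA_X a ha1)
  -- u ∉ Q
  have hu_nQ : u ∉ Q := by
    intro huQ
    have hQne : Q ≠ [] := List.ne_nil_of_mem huQ
    have hlsQ' : Q.getLast? = some ls := by
      rw [← hls?, List.getLast?_eq_getLast (List.cons_ne_nil _ _), List.getLast_cons hQne,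
        List.getLast?_eq_getLast hQne]
    have hlast : Q.getLast? ≠ some u := by
      rw [hlsQ']; intro h0; exact hu_ls (Option.some.inj h0).symm
    obtain ⟨nxt, hn1, hn2⟩ := chain_next hchQ.tail huQ hlast
    obtain ⟨b, hb1, hb2⟩ := mem_zip_of_mem_left hQB huQ
    have harcub : (u, b) ∈ N.arcs := hzipQ _ hb2
    have hnb : nxt ≠ b := by
      intro h0
      exact hPQ_nX nxt (by simp [hn1]) (h0 ▸ hB_X b hb1)
    have hdu := (hdeg u (by simp [huQ])).2
    rcases outdeg_two_cases hdu hn2 harcub hnb harcuh with h0 | h0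
    · exact hh_nQ (h0 ▸ hn1)
    · exact hh_nX (h0 ▸ hB_X b hb1)
  -- the cactus cycle
  have hC1 : N.IsCycle (vH :: h :: (P ++ Q)).toFinset :=
    isCycle_two_paths hchP hchQ hvh_ne hh_nP hh_nQ hvH_nP hvH_nQ hPnd hQnd hdisjPQ (Or.inl hPne)
  by_cases hu_vH : u = vH
  · -- extra arc (vH, h): small cycle through P only
    subst hu_vH
    have hQne : Q ≠ [] := by
      intro h0
      apply hu_ls
      subst h0
      rw [hls]
      rfl
    have hchS : List.Chain' N.ArcRel (u :: (([] : List ℕ) ++ [h])) := by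
      exact (List.isChain_pair (R := N.ArcRel)).mpr harcuh
    have hC2 : N.IsCycle (u :: h :: (P ++ ([] : List ℕ))).toFinset :=
      isCycle_two_paths hchP hchS hvh_ne hh_nP (by simp) hvH_nP (by simp) hPnd (by simp)
        (by simp) (Or.inl hPne)
    have q0 := Q.head hQne
    have hq0Q : Q.head hQne ∈ Q := List.head_mem hQne
    have hne12 : (u :: h :: (P ++ Q)).toFinset ≠ (u :: h :: (P ++ ([] : List ℕ))).toFinset := by
      intro h0
      have h1 : Q.head hQne ∈ (u :: h :: (P ++ Q)).toFinset := by
        simp [List.mem_toFinset, hq0Q]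
      rw [h0] at h1
      simp only [List.toFinset_cons, List.append_nil, Finset.mem_insert, List.mem_toFinset] at h1
      rcases h1 with h1 | h1 | h1
      · exact hvH_nQ (h1 ▸ hq0Q)
      · exact hh_nQ (h1 ▸ hq0Q)
      · exact hdisjPQ _ h1 hq0Q
    have hcard := hnest _ _ hC1 hC2 hne12
    have h2 : 2 ≤ ((u :: h :: (P ++ Q)).toFinset ∩ (u :: h :: (P ++ ([] : List ℕ))).toFinset).card :=
      two_le_card_inter hvh_ne (by simp) (by simp) (by simp) (by simp)
    omega
  · -- general case : u outside the cycle
    have hu_verts : u ∈ N.verts := (harc _ harcuh).1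
    obtain ⟨rp, hrp_ch, hrp_last⟩ := exists_chain_of_reach (reach_root hphy vH hvH_verts)
    obtain ⟨rq, hrq_ch, hrq_last⟩ := exists_chain_of_reach (reach_root hphy u hu_verts)
    set p1' : List ℕ := (N.root :: rp) ++ P with hp1'
    have hchainP : List.Chain' N.ArcRel P := (List.isChain_append.mp hchP.tail).1
    have hchp1' : List.Chain' N.ArcRel p1' := by
      rw [hp1']; refine List.isChain_append.mpr ?_
      refine ⟨hrp_ch, hchainP, ?_⟩
      intro x hx y hy
      rw [hrp_last] at hx
      have hx' : x = vH := by simpa using hx.symm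
      have hy' : y = P.head hPne := by
        cases P with
        | nil => exact absurd rfl hPne
        | cons p0 P' =>
          simp only [List.head?_cons, Option.mem_def, Option.some.injEq] at hy
          rw [← hy]; rfl
      rw [hx', hy']
      exact harcvHp
    have hp1'_last : p1'.getLast? = some lp := by
      rw [hp1', List.getLast?_append, hlp?]
      rfl
    set p1 : List ℕ := p1' ++ [h] with hp1
    have hchp1 : List.Chain' N.ArcRel p1 := by
      rw [hp1]; refine List.isChain_append.mpr ?_
      refine ⟨hchp1', List.isChain_singleton h, ?_⟩
      intro x hx y hy
      rw [hp1'_last] at hx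
      have hx' : x = lp := by simpa using hx.symm
      have hy' : y = h := by simpa using hy.symm
      rw [hx', hy']
      exact harclph
    set q' : List ℕ := N.root :: rq with hq'
    set q : List ℕ := q' ++ [h] with hq
    have hchq : List.Chain' N.ArcRel q := by
      rw [hq]; refine List.isChain_append.mpr ?_
      refine ⟨hrq_ch, List.isChain_singleton h, ?_⟩
      intro x hx y hy
      rw [hrq_last] at hx
      have hx' : x = u := by simpa using hx.symm
      have hy' : y = h := by simpa using hy.symm
      rw [hx', hy']
      exact harcuh
    have hp1nd : p1.Nodup := chain'_nodup hac hchp1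
    have hqnd : q.Nodup := chain'_nodup hac hchq
    have hp1nd' : (p1' ++ [h]).Nodup := by rw [← hp1]; exact hp1nd
    have hqnd' : (q' ++ [h]).Nodup := by rw [← hq]; exact hqnd
    have hp1'nd : p1'.Nodup := (List.nodup_append'.mp hp1nd').1
    have hh_np1' : h ∉ p1' := by
      intro h0
      exact (List.nodup_append'.mp hp1nd').2.2 h0 (by simp)
    have hq'nd : q'.Nodup := (List.nodup_append'.mp hqnd').1
    have hh_nq' : h ∉ q' := by
      intro h0
      exact (List.nodup_append'.mp hqnd').2.2 h0 (by simp)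
    -- split p1' at the last vertex also in q'
    obtain ⟨pre, c, post, heq, hcq', hpost⟩ := split_last (fun x => x ∈ q') p1'
      ⟨N.root, by simp [hp1'], by simp [hq']⟩
    obtain ⟨qpre, qpost, heq2⟩ := List.append_of_mem hcq'
    -- nodup consequences
    have hc_npost : c ∉ post := by
      have := heq ▸ hp1'nd
      have h1 := (List.nodup_append'.mp this).2.1
      exact (List.nodup_cons.mp h1).1
    have hpostnd : post.Nodup := by
      have := heq ▸ hp1'nd
      have h1 := (List.nodup_append'.mp this).2.1
      exact (List.nodup_cons.mp h1).2
    have hh_npost : h ∉ post := fun h0 => hh_np1' (by rw [heq]; simp [h0])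
    have hc_p1' : c ∈ p1' := by rw [heq]; simp
    have hc_ne_h : c ≠ h := fun h0 => hh_np1' (h0 ▸ hc_p1')
    have hc_nqpost : c ∉ qpost := by
      have := heq2 ▸ hq'nd
      have h1 := (List.nodup_append'.mp this).2.1
      exact (List.nodup_cons.mp h1).1
    have hqpostnd : qpost.Nodup := by
      have := heq2 ▸ hq'nd
      have h1 := (List.nodup_append'.mp this).2.1
      exact (List.nodup_cons.mp h1).2
    have hh_nqpost : h ∉ qpost := fun h0 => hh_nq' (by rw [heq2]; simp [h0])
    have hdisj2 : ∀ x ∈ post, x ∉ qpost :=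
      fun x hx hx2 => hpost x hx (by rw [heq2]; simp [hx2])
    -- chains for the two path segments
    have ch1 : List.Chain' N.ArcRel (c :: (post ++ [h])) := by
      apply hchp1.suffix
      refine ⟨pre, ?_⟩
      rw [hp1, heq]
      simp
    have ch2 : List.Chain' N.ArcRel (c :: (qpost ++ [h])) := by
      apply hchq.suffix
      refine ⟨qpre, ?_⟩
      rw [hq, heq2]
      simp
    -- q'.getLast? = some u
    have hq'_last : q'.getLast? = some u := hrq_last
    -- the two segments cannot both be trivial
    have hne2 : post ≠ [] ∨ qpost ≠ [] := by
      by_contra h0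
      push_neg at h0
      obtain ⟨h01, h02⟩ := h0
      have hc_lp : c = lp := by
        have h1 : p1'.getLast? = some c := by
          rw [heq, h01]
          rw [List.getLast?_append]
          rfl
        rw [hp1'_last] at h1
        exact (Option.some.inj h1).symm
      have hc_u : c = u := by
        have h1 : q'.getLast? = some c := by
          rw [heq2, h02]
          rw [List.getLast?_append]
          rfl
        rw [hq'_last] at h1
        exact (Option.some.inj h1).symm
      exact hu_lp (hc_u.symm.trans hc_lp)
    have hC2 : N.IsCycle (c :: h :: (post ++ qpost)).toFinset :=
      isCycle_two_paths ch1 ch2 hc_ne_h hh_npost hh_nqpost hc_npost hc_nqpost hpostnd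
        hqpostnd hdisj2 hne2
    -- TransGen helpers
    have TGc_vH : c ∈ (N.root :: rp) → c ≠ vH → Relation.TransGen N.ArcRel c vH := by
      intro hcrp hcne
      obtain ⟨γ, δ, hγδ⟩ := List.append_of_mem hcrp
      have hlast : (c :: δ).getLast? = some vH := by
        rw [← hrp_last, hγδ, List.getLast?_append]
        rw [List.getLast?_eq_getLast (l := (c :: δ)) (List.cons_ne_nil _ _)]
        rfl
      have hvHmem : vH ∈ c :: δ := by
        have := List.getLast_mem (List.cons_ne_nil c δ)
        rw [getLast_eq' (List.cons_ne_nil c δ) hlast] at this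
        exact this
      have hvHδ : vH ∈ δ := by
        rcases List.mem_cons.mp hvHmem with h0 | h0
        · exact absurd h0.symm hcne
        · exact h0
      have hchcδ : List.Chain' N.ArcRel (c :: δ) := hrp_ch.suffix (hγδ ▸ ⟨γ, rfl⟩)
      exact chain'_transGen hchcδ hvHδ
    have hc_nQ' : c ∈ (N.root :: rp) → c ≠ vH → c ∉ Q := by
      intro h1 h2 h3
      have TG1 := TGc_vH h1 h2
      have TG2 : Relation.TransGen N.ArcRel vH c := chain'_transGen hchQ (by simp [h3])
      exact hac c (TG1.trans TG2)
    by_cases hcP : c = vH ∨ c ∈ P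
    · -- c on the cycle
      have hqpost_ne : qpost ≠ [] := by
        intro h0
        have hc_u : c = u := by
          have h1 : q'.getLast? = some c := by
            rw [heq2, h0, List.getLast?_append]
            rfl
          rw [hq'_last] at h1
          exact (Option.some.inj h1).symm
        rcases hcP with h2 | h2
        · exact hu_vH (hc_u ▸ h2)
        · exact hu_nP (hc_u ▸ h2)
      have hu_qpost : u ∈ qpost := by
        have h1 : qpost.getLast? = some u := by
          rw [← hq'_last, heq2, List.getLast?_append]
          rw [List.getLast?_eq_getLast (l := (c :: qpost)) (List.cons_ne_nil _ _),
            List.getLast_cons hqpost_ne, List.getLast?_eq_getLast (l := qpost) hqpost_ne]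
          rfl
        have := List.getLast_mem hqpost_ne
        rw [getLast_eq' hqpost_ne h1] at this
        exact this
      have hne12 : (vH :: h :: (P ++ Q)).toFinset ≠ (c :: h :: (post ++ qpost)).toFinset := by
        intro h0
        have h1 : u ∈ (c :: h :: (post ++ qpost)).toFinset := by
          simp [List.mem_toFinset, hu_qpost]
        rw [← h0] at h1
        simp only [List.toFinset_cons, Finset.mem_insert, List.mem_toFinset,
          List.mem_append] at h1
        rcases h1 with h1 | h1 | h1 | h1
        · exact hu_vH h1
        · exact hu_ne_h h1
        · exact hu_nP h1
        · exact hu_nQ h1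
      have hcC1 : c ∈ (vH :: h :: (P ++ Q)).toFinset := by
        rcases hcP with h0 | h0 <;> simp [List.mem_toFinset, h0]
      have hcard := hnest _ _ hC1 hC2 hne12
      have h2 : 2 ≤ ((vH :: h :: (P ++ Q)).toFinset ∩ (c :: h :: (post ++ qpost)).toFinset).card :=
        two_le_card_inter hc_ne_h.symm (by simp) (by simp) hcC1 (by simp)
      omega
    · -- c strictly above the cycle
      push_neg at hcP
      obtain ⟨hc_ne_vH, hc_nP⟩ := hcP
      have hc_rp : c ∈ N.root :: rp := by
        rcases List.mem_append.mp (hp1' ▸ hc_p1') with h0 | h0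
        · exact h0
        · exact absurd h0 hc_nP
      have hvH_post : vH ∈ post := by
        have hvH_p1' : vH ∈ p1' := by
          have h9 : vH ∈ N.root :: rp := by
            have h8 := List.getLast_mem (List.cons_ne_nil N.root rp)
            rw [getLast_eq' (List.cons_ne_nil N.root rp) hrp_last] at h8
            exact h8
          rw [hp1']
          exact List.mem_append.mpr (Or.inl h9)
        rw [heq] at hvH_p1'
        rcases List.mem_append.mp hvH_p1' with h0 | h0
        · -- vH ∈ pre : contradiction
          exfalso
          obtain ⟨α, β, hαβ⟩ := List.append_of_mem h0
          have hTG1 : Relation.TransGen N.ArcRel vH c := by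
            have hsuf : List.Chain' N.ArcRel (vH :: (β ++ c :: post)) := by
              apply hchp1'.suffix
              rw [heq, hαβ]
              exact ⟨α, by simp⟩
            exact chain'_transGen hsuf (by simp)
          exact hac c ((TGc_vH hc_rp hc_ne_vH).trans hTG1)
        · rcases List.mem_cons.mp h0 with h1 | h1
          · exact absurd h1.symm hc_ne_vH
          · exact h1
      have hne12 : (vH :: h :: (P ++ Q)).toFinset ≠ (c :: h :: (post ++ qpost)).toFinset := by
        intro h0
        have h1 : c ∈ (vH :: h :: (P ++ Q)).toFinset := by
          rw [h0]; simp
        simp only [List.toFinset_cons, Finset.mem_insert, List.mem_toFinset,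
          List.mem_append] at h1
        rcases h1 with h1 | h1 | h1 | h1
        · exact hc_ne_vH h1
        · exact hc_ne_h h1
        · exact hc_nP h1
        · exact hc_nQ' hc_rp hc_ne_vH h1
      have hcard := hnest _ _ hC1 hC2 hne12
      have h2 : 2 ≤ ((vH :: h :: (P ++ Q)).toFinset ∩ (c :: h :: (post ++ qpost)).toFinset).card := by
        apply two_le_card_inter hvh_ne (by simp) _ (by simp) (by simp)
        simp [List.mem_toFinset, hvH_post]
      omega

lemma isCycle_mono (hsub : M.arcs ⊆ N.arcs) {C : Finset ℕ} (hC : M.IsCycle C) :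
    N.IsCycle C := by
  obtain ⟨n, hn, f, hinj, himg, hadj⟩ := hC
  refine ⟨n, hn, f, hinj, himg, fun i => ?_⟩
  rcases hadj i with h1 | h1
  · exact Or.inl (hsub h1)
  · exact Or.inr (hsub h1)

lemma oneNested_mono (hsub : M.arcs ⊆ N.arcs) (hnest : N.OneNested) : M.OneNested :=
  fun C₁ C₂ h1 h2 hne => hnest C₁ C₂ (isCycle_mono hsub h1) (isCycle_mono hsub h2) hne

lemma transGen_head {α : Type*} {r : α → α → Prop} {a b : α}
    (h : Relation.TransGen r a b) : ∃ c, r a c := by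
  induction h with
  | single h => exact ⟨_, h⟩
  | tail _ _ ih => exact ih

section Relabel

variable {g : ℕ → ℕ}

/-- Degree transfer under relabeling. -/
lemma relabel_indeg (hend : ∀ a ∈ N.arcs, a.1 ∈ N.verts ∧ a.2 ∈ N.verts)
    (hinj : Set.InjOn g N.verts) (hv : v ∈ N.verts) :
    (Net.mk (N.verts.image g) (N.arcs.image fun a => (g a.1, g a.2)) (g N.root)).indeg (g v)
      = N.indeg v := by
  classical
  have himg : (N.arcs.image fun a => (g a.1, g a.2)).filter (fun a => a.2 = g v) =
      (N.arcs.filter fun a => a.2 = v).image (fun a => (g a.1, g a.2)) := by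
    ext a
    simp only [Finset.mem_filter, Finset.mem_image]
    constructor
    · rintro ⟨⟨b, hb, rfl⟩, h2⟩
      refine ⟨b, ⟨hb, ?_⟩, rfl⟩
      exact hinj (hend b hb).2 hv h2
    · rintro ⟨b, ⟨hb, hb2⟩, rfl⟩
      exact ⟨⟨b, hb, rfl⟩, by rw [hb2]⟩
  show ((N.arcs.image fun a => (g a.1, g a.2)).filter (fun a => a.2 = g v)).card = _
  rw [himg]
  apply Finset.card_image_of_injOn
  intro a ha b hb hab
  simp only [Finset.mem_coe, Finset.mem_filter] at ha hb
  have h1 := hinj (hend a ha.1).1 (hend b hb.1).1 (congrArg Prod.fst hab)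
  have h2 := hinj (hend a ha.1).2 (hend b hb.1).2 (congrArg Prod.snd hab)
  exact Prod.ext h1 h2

lemma relabel_outdeg (hend : ∀ a ∈ N.arcs, a.1 ∈ N.verts ∧ a.2 ∈ N.verts)
    (hinj : Set.InjOn g N.verts) (hv : v ∈ N.verts) :
    (Net.mk (N.verts.image g) (N.arcs.image fun a => (g a.1, g a.2)) (g N.root)).outdeg (g v)
      = N.outdeg v := by
  classical
  have himg : (N.arcs.image fun a => (g a.1, g a.2)).filter (fun a => a.1 = g v) =
      (N.arcs.filter fun a => a.1 = v).image (fun a => (g a.1, g a.2)) := by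
    ext a
    simp only [Finset.mem_filter, Finset.mem_image]
    constructor
    · rintro ⟨⟨b, hb, rfl⟩, h2⟩
      refine ⟨b, ⟨hb, ?_⟩, rfl⟩
      exact hinj (hend b hb).1 hv h2
    · rintro ⟨b, ⟨hb, hb2⟩, rfl⟩
      exact ⟨⟨b, hb, rfl⟩, by rw [hb2]⟩
  show ((N.arcs.image fun a => (g a.1, g a.2)).filter (fun a => a.1 = g v)).card = _
  rw [himg]
  apply Finset.card_image_of_injOn
  intro a ha b hb hab
  simp only [Finset.mem_coe, Finset.mem_filter] at ha hb
  have h1 := hinj (hend a ha.1).1 (hend b hb.1).1 (congrArg Prod.fst hab)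
  have h2 := hinj (hend a ha.1).2 (hend b hb.1).2 (congrArg Prod.snd hab)
  exact Prod.ext h1 h2

lemma relabel_transGen (hend : ∀ a ∈ N.arcs, a.1 ∈ N.verts ∧ a.2 ∈ N.verts)
    (hinj : Set.InjOn g N.verts)
    {u' v' : ℕ}
    (h : Relation.TransGen
      (Net.mk (N.verts.image g) (N.arcs.image fun a => (g a.1, g a.2)) (g N.root)).ArcRel u' v') :
    ∀ u ∈ N.verts, ∀ v ∈ N.verts, g u = u' → g v = v' →
      Relation.TransGen N.ArcRel u v := by
  induction h with
  | single harc =>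
    intro u hu v hv hgu hgv
    obtain ⟨a, ha, ha2⟩ := Finset.mem_image.mp harc
    obtain ⟨ha21, ha22⟩ : g a.1 = _ ∧ g a.2 = _ := by
      simpa [Prod.ext_iff] using ha2
    have h1 : a.1 = u := hinj (hend a ha).1 hu (by rw [ha21, hgu])
    have h2 : a.2 = v := hinj (hend a ha).2 hv (by rw [ha22, hgv])
    exact Relation.TransGen.single (show (u, v) ∈ N.arcs by rw [← h1, ← h2]; exact ha)
  | tail _ harc ih =>
    intro u hu v hv hgu hgv
    obtain ⟨a, ha, ha2⟩ := Finset.mem_image.mp harc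
    obtain ⟨ha21, ha22⟩ : g a.1 = _ ∧ g a.2 = _ := by
      simpa [Prod.ext_iff] using ha2
    have h2 : a.2 = v := hinj (hend a ha).2 hv (by rw [ha22, hgv])
    have hIH := ih u hu a.1 (hend a ha).1 hgu ha21
    exact hIH.tail (show (a.1, v) ∈ N.arcs by rw [← h2]; exact ha)

lemma relabel_phylo (hphy : N.IsPhyloNet X) (hinj : Set.InjOn g N.verts) :
    (Net.mk (N.verts.image g) (N.arcs.image fun a => (g a.1, g a.2)) (g N.root)).IsPhyloNet
      (X.image g) := by
  classical
  obtain ⟨hend, hac, hroot, hrind, huniq, hXsub, hleaf, htree, hhyb⟩ := hphy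
  set M : Net := Net.mk (N.verts.image g) (N.arcs.image fun a => (g a.1, g a.2)) (g N.root)
    with hM
  refine ⟨?_, ?_, ?_, ?_, ?_, ?_, ?_, ?_, ?_⟩
  · rintro a ha
    obtain ⟨b, hb, rfl⟩ := Finset.mem_image.mp ha
    exact ⟨Finset.mem_image_of_mem g (hend b hb).1, Finset.mem_image_of_mem g (hend b hb).2⟩
  · intro v' hv'
    obtain ⟨w', hw'⟩ := transGen_head hv'
    obtain ⟨a, ha, ha2⟩ := Finset.mem_image.mp hw'
    have hgu : g a.1 = v' := congrArg Prod.fst ha2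
    exact hac a.1 (relabel_transGen hend hinj hv' a.1 (hend a ha).1 a.1 (hend a ha).1 hgu hgu)
  · exact Finset.mem_image_of_mem g hroot
  · rw [relabel_indeg hend hinj hroot]; exact hrind
  · intro v' hv' hind
    obtain ⟨v, hv, rfl⟩ := Finset.mem_image.mp hv'
    rw [relabel_indeg hend hinj hv] at hind
    rw [huniq v hv hind]
  · intro x hx
    obtain ⟨y, hy, rfl⟩ := Finset.mem_image.mp hx
    exact Finset.mem_image_of_mem g (hXsub hy)
  · intro v' hv'
    obtain ⟨v, hv, rfl⟩ := Finset.mem_image.mp hv'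
    unfold IsLeaf
    rw [relabel_indeg hend hinj hv, relabel_outdeg hend hinj hv]
    constructor
    · intro hl
      exact Finset.mem_image_of_mem g ((hleaf v hv).mp hl)
    · intro hm
      obtain ⟨y, hy, hgy⟩ := Finset.mem_image.mp hm
      have : y = v := hinj (hXsub hy) hv hgy
      exact (hleaf v hv).mpr (this ▸ hy)
  · intro v' hv' hne hout hind
    obtain ⟨v, hv, rfl⟩ := Finset.mem_image.mp hv'
    rw [relabel_outdeg hend hinj hv] at hout ⊢
    rw [relabel_indeg hend hinj hv] at hind
    have hvr : v ≠ N.root := by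
      intro h0; rw [h0] at hind; omega
    exact htree v hv hvr hout hind
  · intro v' hv' hind
    obtain ⟨v, hv, rfl⟩ := Finset.mem_image.mp hv'
    rw [relabel_outdeg hend hinj hv]
    rw [relabel_indeg hend hinj hv] at hind
    exact hhyb v hv hind

lemma relabel_oneNested (hend : ∀ a ∈ N.arcs, a.1 ∈ N.verts ∧ a.2 ∈ N.verts)
    (hinj : Set.InjOn g N.verts) (hnest : N.OneNested) :
    (Net.mk (N.verts.image g) (N.arcs.image fun a => (g a.1, g a.2)) (g N.root)).OneNested := by
  classical
  set M : Net := Net.mk (N.verts.image g) (N.arcs.image fun a => (g a.1, g a.2)) (g N.root)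
    with hM
  set e : ℕ → ℕ := Function.invFunOn g ↑N.verts with he
  -- decode an M-adjacency
  have hdec : ∀ u' v' : ℕ, M.Adj u' v' → ∃ u ∈ N.verts, ∃ v ∈ N.verts,
      g u = u' ∧ g v = v' ∧ N.Adj u v := by
    intro u' v' hadj
    rcases hadj with h1 | h1
    · obtain ⟨a, ha, ha2⟩ := Finset.mem_image.mp h1
      exact ⟨a.1, (hend a ha).1, a.2, (hend a ha).2, congrArg Prod.fst ha2,
        congrArg Prod.snd ha2, Or.inl (by simpa using ha)⟩
    · obtain ⟨a, ha, ha2⟩ := Finset.mem_image.mp h1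
      exact ⟨a.2, (hend a ha).2, a.1, (hend a ha).1, congrArg Prod.snd ha2,
        congrArg Prod.fst ha2, Or.inr (by simpa using ha)⟩
  -- transfer a cycle backwards
  have hcyc : ∀ C : Finset ℕ, M.IsCycle C →
      ∃ C' : Finset ℕ, N.IsCycle C' ∧ C = C'.image g ∧ C' ⊆ N.verts := by
    intro C hC
    obtain ⟨n, hn, f, hinj', himg, hadj⟩ := hC
    have hmemv : ∀ i : Fin n, ∃ w ∈ N.verts, g w = f i := by
      intro i
      have hadji := hadj i
      obtain ⟨u, hu, v, hv, hgu, hgv, _⟩ := hdec _ _ hadji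
      exact ⟨u, hu, hgu⟩
    have hef : ∀ i : Fin n, e (f i) ∈ N.verts ∧ g (e (f i)) = f i := by
      intro i
      obtain ⟨w, hw, hgw⟩ := hmemv i
      constructor
      · exact Function.invFunOn_mem ⟨w, by simpa using ⟨hw, hgw⟩⟩
      · exact Function.invFunOn_eq ⟨w, by simpa using ⟨hw, hgw⟩⟩
    refine ⟨Finset.image (e ∘ f) Finset.univ, ⟨n, hn, e ∘ f, ?_, rfl, ?_⟩, ?_, ?_⟩
    · intro i j hij
      apply hinj'
      have := congrArg g hij
      simpa [Function.comp, (hef i).2, (hef j).2] using this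
    · intro i
      have hadji := hadj i
      obtain ⟨u, hu, v, hv, hgu, hgv, huv⟩ := hdec _ _ hadji
      have h1 : e (f i) = u := by
        apply hinj (hef i).1 hu
        rw [(hef i).2, hgu]
      have h2 : e (f ⟨(i.val + 1) % n, Nat.mod_lt _ (by omega)⟩) = v := by
        apply hinj (hef _).1 hv
        rw [(hef _).2, hgv]
      simp only [Function.comp]
      rw [h1, h2]
      exact huv
    · rw [← himg, Finset.image_image]
      ext a
      simp only [Finset.mem_image, Finset.mem_univ, true_and]
      constructor
      · rintro ⟨i, rfl⟩
        exact ⟨i, ((hef i).2).symm ▸ rfl⟩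
      · rintro ⟨i, hi⟩
        refine ⟨i, ?_⟩
        rw [← hi]
        simp [Function.comp, (hef i).2]
    · intro a ha
      obtain ⟨i, _, rfl⟩ := Finset.mem_image.mp ha
      exact (hef i).1
  intro C₁ C₂ h1 h2 hne
  obtain ⟨C₁', hC1', hC1img, hC1sub⟩ := hcyc C₁ h1
  obtain ⟨C₂', hC2', hC2img, hC2sub⟩ := hcyc C₂ h2
  have hne' : C₁' ≠ C₂' := by
    intro h0
    rw [h0] at hC1img
    exact hne (hC1img.trans hC2img.symm)
  have hint : C₁ ∩ C₂ ⊆ (C₁' ∩ C₂').image g := by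
    intro x hx
    have hx1 : x ∈ C₁ := (Finset.mem_inter.mp hx).1
    have hx2 : x ∈ C₂ := (Finset.mem_inter.mp hx).2
    rw [hC1img] at hx1
    rw [hC2img] at hx2
    obtain ⟨a, ha, rfl⟩ := Finset.mem_image.mp hx1
    obtain ⟨b, hb, hgb⟩ := Finset.mem_image.mp hx2
    have hba : b = a := hinj (hC2sub hb) (hC1sub ha) hgb
    refine Finset.mem_image.mpr ⟨a, ?_, rfl⟩
    exact Finset.mem_inter.mpr ⟨ha, hba ▸ hb⟩
  calc (C₁ ∩ C₂).card ≤ ((C₁' ∩ C₂').image g).card := Finset.card_le_card hint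
    _ ≤ (C₁' ∩ C₂').card := Finset.card_image_le
    _ ≤ 1 := hnest C₁' C₂' hC1' hC2' hne'

end Relabel

lemma root_not_mem_X (hphy : N.IsPhyloNet X) : N.root ∉ X := by
  intro h0
  have h1 := (leaf_of_mem_X hphy h0).1
  have h2 := hphy.2.2.2.2.1
  rw [hphy.2.2.2.1] at h1
  omega

lemma card_sdiff_helper {S X : Finset ℕ} (hSX : S ⊆ X) (hz : z ∈ S) :
    (X \ S.erase z).card + (S.card - 1) = X.card := by
  have hsub : S.erase z ⊆ X := (Finset.erase_subset z S).trans hSX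
  rw [Finset.card_sdiff_of_subset hsub, Finset.card_erase_of_mem hz]
  have h1 := Finset.card_le_card hsub
  rw [Finset.card_erase_of_mem hz] at h1
  have h2 := Finset.card_pos.mpr ⟨z, hz⟩
  omega

/-- The cherry reduction case. -/
lemma cherry_case (hphy : N.IsPhyloNet X) (hnest : N.OneNested)
    (hz : z ∈ S) (hch : N.IsCherry X S) (hniso : ¬ N.IsIsolatedCherry X S) :
    (N.cherryRed S z).IsPhyloNet (X \ S.erase z) ∧ (N.cherryRed S z).OneNested := by
  classical
  obtain ⟨hS2, hSX, vS, hvSv, hvS_arcs, hvS_no⟩ := hch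
  obtain ⟨hend, hac, hroot, hrind, huniq, hXsub, hleaf, htree, hhyb⟩ := hphy
  have hphy' : N.IsPhyloNet X :=
    ⟨hend, hac, hroot, hrind, huniq, hXsub, hleaf, htree, hhyb⟩
  set Sz := S.erase z with hSz
  set M := N.cherryRed S z with hM
  have hSzX : Sz ⊆ X := (Finset.erase_subset z S).trans hSX
  have h_leafS : ∀ x ∈ S, N.IsLeaf x := fun x hx => leaf_of_mem_X hphy' (hSX hx)
  have h_notail : ∀ a ∈ N.arcs, a.1 ∉ Sz := by
    intro a ha h1
    exact no_out_of_outdeg_zero (h_leafS a.1 (Finset.mem_of_mem_erase h1)).2 ha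
  have h_head : ∀ a ∈ N.arcs, a.2 ∈ Sz → a.1 = vS := by
    intro a ha h2
    exact indeg_one_unique (h_leafS a.2 (Finset.mem_of_mem_erase h2)).1 ha
      (hvS_arcs a.2 (Finset.mem_of_mem_erase h2))
  have hvS_nX : vS ∉ X := tail_not_mem_X hphy' (hvS_arcs z hz)
  have hvS_nSz : vS ∉ Sz := fun h0 => hvS_nX (hSzX h0)
  have hroot_nX : N.root ∉ X := root_not_mem_X hphy'
  have hroot_nSz : N.root ∉ Sz := fun h0 => hroot_nX (hSzX h0)
  -- degrees
  have hindeg : ∀ v : ℕ, v ∉ Sz → M.indeg v = N.indeg v := by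
    intro v hv
    show ((N.arcs.filter _).filter fun a => a.2 = v).card = _
    rw [Finset.filter_filter]
    congr 1
    apply Finset.filter_congr
    intro a ha
    constructor
    · exact fun h => h.2
    · intro h
      exact ⟨⟨h_notail a ha, h ▸ hv⟩, h⟩
  have houtdeg_ne : ∀ v : ℕ, v ≠ vS → M.outdeg v = N.outdeg v := by
    intro v hv
    show ((N.arcs.filter _).filter fun a => a.1 = v).card = _
    rw [Finset.filter_filter]
    congr 1
    apply Finset.filter_congr
    intro a ha
    constructor
    · exact fun h => h.2
    · intro h
      refine ⟨⟨h_notail a ha, fun h2 => ?_⟩, h⟩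
      exact hv (h ▸ (h_head a ha h2))
  have hSzcard : Sz.card = S.card - 1 := Finset.card_erase_of_mem hz
  have houtdeg_vS : M.outdeg vS + (S.card - 1) = N.outdeg vS := by
    have hsplit := Finset.card_filter_add_card_filter_not
      (s := N.arcs.filter fun a => a.1 = vS) (p := fun a => a.2 ∉ Sz)
    have h1 : ((N.arcs.filter fun a => a.1 = vS).filter fun a => a.2 ∉ Sz).card
        = M.outdeg vS := by
      show _ = ((N.arcs.filter _).filter fun a => a.1 = vS).card
      rw [Finset.filter_filter, Finset.filter_filter]
      congr 1
      apply Finset.filter_congr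
      intro a ha
      constructor
      · exact fun h => ⟨⟨h_notail a ha, h.2⟩, h.1⟩
      · exact fun h => ⟨h.2, h.1.2⟩
    have h2 : ((N.arcs.filter fun a => a.1 = vS).filter fun a => ¬ a.2 ∉ Sz)
        = Sz.image (fun x => (vS, x)) := by
      ext a
      simp only [Finset.mem_filter, not_not, Finset.mem_image]
      constructor
      · rintro ⟨⟨ha, h1⟩, h2⟩
        exact ⟨a.2, h2, by rw [← h1]⟩
      · rintro ⟨x, hx, rfl⟩
        exact ⟨⟨hvS_arcs x (Finset.mem_of_mem_erase hx), rfl⟩, hx⟩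
    have h3 : (Sz.image (fun x => (vS, x))).card = S.card - 1 := by
      rw [Finset.card_image_of_injective _ (fun a b hab => by simpa using hab), hSzcard]
    rw [h1, h2, h3] at hsplit
    rw [outArcs_def]
    exact hsplit
  have houtdeg_ge : S.card ≤ N.outdeg vS := by
    have hsub : S.image (fun x => (vS, x)) ⊆ N.arcs.filter fun a => a.1 = vS := by
      intro a ha
      obtain ⟨x, hx, rfl⟩ := Finset.mem_image.mp ha
      simp [hvS_arcs x hx]
    calc S.card = (S.image (fun x => (vS, x))).card :=
          (Finset.card_image_of_injective _ (fun a b hab => by simpa using hab)).symm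
      _ ≤ _ := Finset.card_le_card hsub
  have hvout_pos : 1 ≤ M.outdeg vS := by omega
  have hniso' : ¬ (N.outdeg vS = S.card ∧ N.indeg vS = 1) := by
    rintro ⟨h1, h2⟩
    exact hniso ⟨hS2, hSX, vS, ⟨hvSv, hvS_arcs, hvS_no⟩, h1, h2⟩
  constructor
  · refine ⟨?_, ?_, ?_, ?_, ?_, ?_, ?_, ?_, ?_⟩
    · intro a ha
      rw [hM] at ha
      simp only [cherryRed, Finset.mem_filter] at ha
      obtain ⟨ha1, ha2, ha3⟩ := ha
      exact ⟨Finset.mem_sdiff.mpr ⟨(hend a ha1).1, ha2⟩,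
        Finset.mem_sdiff.mpr ⟨(hend a ha1).2, ha3⟩⟩
    · intro v hv
      apply hac v
      apply Relation.TransGen.mono (r := M.ArcRel) ?_ _ _ hv
      intro a b hab
      exact (Finset.mem_filter.mp hab).1
    · exact Finset.mem_sdiff.mpr ⟨hroot, hroot_nSz⟩
    · rw [show M.root = N.root from rfl, hindeg _ hroot_nSz]; exact hrind
    · intro v hv hind
      have hv2 := Finset.mem_sdiff.mp hv
      rw [hindeg _ hv2.2] at hind
      exact huniq v hv2.1 hind
    · intro x hx
      have hx2 := Finset.mem_sdiff.mp hx
      exact Finset.mem_sdiff.mpr ⟨hXsub hx2.1, hx2.2⟩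
    · intro v hv
      have hv2 := Finset.mem_sdiff.mp hv
      by_cases hvvS : v = vS
      · subst hvvS
        constructor
        · intro hl
          exfalso
          have := hl.2
          omega
        · intro hm
          exact absurd (Finset.mem_sdiff.mp hm).1 hvS_nX
      · unfold IsLeaf
        rw [hindeg _ hv2.2, houtdeg_ne _ hvvS]
        constructor
        · intro hl
          exact Finset.mem_sdiff.mpr ⟨(hleaf v hv2.1).mp hl, hv2.2⟩
        · intro hm
          exact (hleaf v hv2.1).mpr (Finset.mem_sdiff.mp hm).1
    · intro v hv hvr hout hind
      have hv2 := Finset.mem_sdiff.mp hv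
      rw [hindeg _ hv2.2] at hind
      by_cases hvvS : v = vS
      · rw [hvvS] at hind ⊢
        have hne : N.outdeg vS ≠ S.card := fun h0 => hniso' ⟨h0, hind⟩
        omega
      · rw [houtdeg_ne _ hvvS] at hout ⊢
        exact htree v hv2.1 hvr hout hind
    · intro v hv hind
      have hv2 := Finset.mem_sdiff.mp hv
      rw [hindeg _ hv2.2] at hind
      by_cases hvvS : v = vS
      · subst hvvS
        exact hvout_pos
      · rw [houtdeg_ne _ hvvS]
        exact hhyb v hv2.1 hind
  · exact oneNested_mono (Finset.filter_subset _ _) hnest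

/-- The isolated cherry reduction case. -/
lemma isoCherry_case {vS : ℕ} (hphy : N.IsPhyloNet X) (hnest : N.OneNested)
    (hz : z ∈ S) (hS2 : 2 ≤ S.card) (hSX : S ⊆ X) (hvS : N.IsCherryVert X S vS)
    (hout : N.outdeg vS = S.card) (hind : N.indeg vS = 1) :
    (N.isoCherryRed S z vS).IsPhyloNet (X \ S.erase z) ∧ (N.isoCherryRed S z vS).OneNested := by
  classical
  obtain ⟨hvSv, hvS_arcs, hvS_no⟩ := hvS
  obtain ⟨hend, hac, hroot, hrind, huniq, hXsub, hleaf, htree, hhyb⟩ := hphy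
  have hphy' : N.IsPhyloNet X :=
    ⟨hend, hac, hroot, hrind, huniq, hXsub, hleaf, htree, hhyb⟩
  set M₀ : Net := Net.mk (N.verts \ S) (N.arcs.filter fun a => a.1 ∉ S ∧ a.2 ∉ S) N.root
    with hM₀
  have h_leafS : ∀ x ∈ S, N.IsLeaf x := fun x hx => leaf_of_mem_X hphy' (hSX hx)
  have h_notail : ∀ a ∈ N.arcs, a.1 ∉ S := by
    intro a ha h1
    exact no_out_of_outdeg_zero (h_leafS a.1 h1).2 ha
  have h_head : ∀ a ∈ N.arcs, a.2 ∈ S → a.1 = vS := by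
    intro a ha h2
    exact indeg_one_unique (h_leafS a.2 h2).1 ha (hvS_arcs a.2 h2)
  have hvS_nX : vS ∉ X := tail_not_mem_X hphy' (hvS_arcs z hz)
  have hvS_nS : vS ∉ S := fun h0 => hvS_nX (hSX h0)
  have hroot_nX : N.root ∉ X := root_not_mem_X hphy'
  have hroot_nS : N.root ∉ S := fun h0 => hroot_nX (hSX h0)
  have hz_X : z ∈ X := hSX hz
  -- every out-arc of vS goes into S
  have hvS_out : ∀ y : ℕ, (vS, y) ∈ N.arcs → y ∈ S := by
    intro y hy
    have hsub : S.image (fun x => (vS, x)) ⊆ N.arcs.filter fun a => a.1 = vS := by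
      intro a ha
      obtain ⟨x, hx, rfl⟩ := Finset.mem_image.mp ha
      simp [hvS_arcs x hx]
    have hcard : (N.arcs.filter fun a => a.1 = vS).card ≤ (S.image (fun x => (vS, x))).card := by
      rw [Finset.card_image_of_injective _ (fun a b hab => by simpa using hab)]
      rw [← hout]
      exact le_rfl
    have heq := Finset.eq_of_subset_of_card_le hsub hcard
    have hmem : (vS, y) ∈ S.image (fun x => (vS, x)) := by
      rw [heq]
      simp [hy]
    obtain ⟨x, hx, hxy⟩ := Finset.mem_image.mp hmem
    have : x = y := by simpa using hxy
    exact this ▸ hx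
  -- degrees in M₀
  have hindeg : ∀ v : ℕ, v ∉ S → M₀.indeg v = N.indeg v := by
    intro v hv
    show ((N.arcs.filter _).filter fun a => a.2 = v).card = _
    rw [Finset.filter_filter]
    congr 1
    apply Finset.filter_congr
    intro a ha
    constructor
    · exact fun h => h.2
    · intro h
      exact ⟨⟨h_notail a ha, h ▸ hv⟩, h⟩
  have houtdeg_ne : ∀ v : ℕ, v ≠ vS → M₀.outdeg v = N.outdeg v := by
    intro v hv
    show ((N.arcs.filter _).filter fun a => a.1 = v).card = _
    rw [Finset.filter_filter]
    congr 1
    apply Finset.filter_congr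
    intro a ha
    constructor
    · exact fun h => h.2
    · intro h
      refine ⟨⟨h_notail a ha, fun h2 => ?_⟩, h⟩
      exact hv (h ▸ (h_head a ha h2))
  have houtdeg_vS : M₀.outdeg vS = 0 := by
    show (M₀.arcs.filter fun a => a.1 = vS).card = 0
    rw [Finset.card_eq_zero]
    apply Finset.eq_empty_iff_forall_notMem.mpr
    intro a ha
    obtain ⟨haM, h1⟩ := Finset.mem_filter.mp ha
    have haN : a ∈ N.arcs.filter fun a => a.1 ∉ S ∧ a.2 ∉ S := haM
    obtain ⟨haN2, hp⟩ := Finset.mem_filter.mp haN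
    exact hp.2 (hvS_out a.2 (by rw [← h1]; exact haN2))
  -- M₀ is a phylogenetic network on insert vS (X \ S)
  have hM₀phy : M₀.IsPhyloNet (insert vS (X \ S)) := by
    refine ⟨?_, ?_, ?_, ?_, ?_, ?_, ?_, ?_, ?_⟩
    · intro a ha
      rw [Finset.mem_filter] at ha
      exact ⟨Finset.mem_sdiff.mpr ⟨(hend a ha.1).1, ha.2.1⟩,
        Finset.mem_sdiff.mpr ⟨(hend a ha.1).2, ha.2.2⟩⟩
    · intro v hv
      apply hac v
      apply Relation.TransGen.mono (r := M₀.ArcRel) ?_ _ _ hv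
      intro a b hab
      exact (Finset.mem_filter.mp hab).1
    · exact Finset.mem_sdiff.mpr ⟨hroot, hroot_nS⟩
    · rw [show M₀.root = N.root from rfl, hindeg _ hroot_nS]; exact hrind
    · intro v hv hind2
      have hv2 := Finset.mem_sdiff.mp hv
      rw [hindeg _ hv2.2] at hind2
      exact huniq v hv2.1 hind2
    · intro x hx
      rcases Finset.mem_insert.mp hx with rfl | hx2
      · exact Finset.mem_sdiff.mpr ⟨hvSv, hvS_nS⟩
      · have := Finset.mem_sdiff.mp hx2
        exact Finset.mem_sdiff.mpr ⟨hXsub this.1, this.2⟩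
    · intro v hv
      have hv2 := Finset.mem_sdiff.mp hv
      by_cases hvvS : v = vS
      · subst hvvS
        constructor
        · intro _
          exact Finset.mem_insert_self _ _
        · intro _
          exact ⟨by rw [hindeg _ hv2.2]; exact hind, houtdeg_vS⟩
      · unfold IsLeaf
        rw [hindeg _ hv2.2, houtdeg_ne _ hvvS]
        constructor
        · intro hl
          exact Finset.mem_insert.mpr (Or.inr (Finset.mem_sdiff.mpr
            ⟨(hleaf v hv2.1).mp hl, hv2.2⟩))
        · intro hm
          rcases Finset.mem_insert.mp hm with h0 | h0
          · exact absurd h0 hvvS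
          · exact (hleaf v hv2.1).mpr (Finset.mem_sdiff.mp h0).1
    · intro v hv hvr hout2 hind2
      have hv2 := Finset.mem_sdiff.mp hv
      rw [hindeg _ hv2.2] at hind2
      by_cases hvvS : v = vS
      · exact absurd (hvvS ▸ houtdeg_vS) hout2
      · rw [houtdeg_ne _ hvvS] at hout2 ⊢
        exact htree v hv2.1 hvr hout2 hind2
    · intro v hv hind2
      have hv2 := Finset.mem_sdiff.mp hv
      rw [hindeg _ hv2.2] at hind2
      by_cases hvvS : v = vS
      · rw [hvvS] at hind2
        rw [hind] at hind2
        omega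
      · rw [houtdeg_ne _ hvvS]
        exact hhyb v hv2.1 hind2
  have hM₀nest : M₀.OneNested := oneNested_mono (Finset.filter_subset _ _) hnest
  have hM₀end : ∀ a ∈ M₀.arcs, a.1 ∈ M₀.verts ∧ a.2 ∈ M₀.verts := hM₀phy.1
  -- injectivity of the renaming on M₀.verts
  have hz_nv : z ∉ N.verts \ S := fun h0 => (Finset.mem_sdiff.mp h0).2 hz
  have hinj : Set.InjOn (rn vS z) ↑M₀.verts := by
    intro a ha b hb hab
    simp only [Finset.coe_sdiff, Set.mem_diff, Finset.mem_coe] at ha hb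
    unfold rn at hab
    by_cases h1 : a = vS <;> by_cases h2 : b = vS <;> simp [h1, h2] at hab
    · rw [h1, h2]
    · exfalso
      exact ((Finset.mem_sdiff.mp (show b ∈ N.verts \ S from hb)).2 (hab ▸ hz))
    · exfalso
      exact ((Finset.mem_sdiff.mp (show a ∈ N.verts \ S from ha)).2 (hab.symm ▸ hz))
    · exact hab
  have hphyR := relabel_phylo (g := rn vS z) hM₀phy hinj
  have hnestR := relabel_oneNested (g := rn vS z) hM₀end hinj hM₀nest
  have heqnet : N.isoCherryRed S z vS =
      Net.mk (M₀.verts.image (rn vS z)) (M₀.arcs.image fun a => (rn vS z a.1, rn vS z a.2))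
        (rn vS z M₀.root) := rfl
  have heqX : (insert vS (X \ S)).image (rn vS z) = X \ S.erase z := by
    rw [Finset.image_insert]
    have h1 : rn vS z vS = z := by simp [rn]
    have h2 : (X \ S).image (rn vS z) = X \ S := by
      ext x
      simp only [Finset.mem_image, Finset.mem_sdiff]
      constructor
      · rintro ⟨y, ⟨hy1, hy2⟩, rfl⟩
        have hyne : y ≠ vS := by
          intro h0; rw [h0] at hy1; exact hvS_nX hy1
        have hyy : rn vS z y = y := by
          unfold rn; rw [if_neg hyne]
        rw [hyy]; exact ⟨hy1, hy2⟩
      · intro hx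
        refine ⟨x, hx, ?_⟩
        have hxne : x ≠ vS := by
          intro h0; rw [h0] at hx; exact hvS_nX hx.1
        unfold rn; rw [if_neg hxne]
    rw [h1, h2]
    ext x
    simp only [Finset.mem_insert, Finset.mem_sdiff, Finset.mem_erase]
    constructor
    · rintro (rfl | ⟨h3, h4⟩)
      · exact ⟨hz_X, fun h5 => h5.1 rfl⟩
      · exact ⟨h3, fun h5 => h4 h5.2⟩
    · rintro ⟨h3, h4⟩
      by_cases h5 : x = z
      · exact Or.inl h5
      · exact Or.inr ⟨h3, fun h6 => h4 ⟨h5, h6⟩⟩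
  constructor
  · rw [heqnet, ← heqX]
    exact hphyR
  · rw [heqnet]
    exact hnestR

lemma outdeg_one_unique (h : N.outdeg v = 1) (h1 : (v, x) ∈ N.arcs) (h2 : (v, y) ∈ N.arcs) :
    x = y := by
  have hu : (v, x) ∈ N.arcs.filter fun a => a.1 = v := by simp [h1]
  have hw : (v, y) ∈ N.arcs.filter fun a => a.1 = v := by simp [h2]
  rw [outArcs_def, Finset.card_eq_one] at h
  obtain ⟨a, ha⟩ := h
  rw [ha] at hu hw
  simp at hu hw
  rw [← hw] at hu
  exact (Prod.mk.injEq _ _ _ _).mp hu |>.2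

lemma mem_zip_of_mem_right {P A : List ℕ} (hlen : P.length = A.length) {a : ℕ} (ha : a ∈ A) :
    ∃ u ∈ P, (u, a) ∈ P.zip A := by
  obtain ⟨i, hi⟩ := List.mem_iff_get.mp ha
  refine ⟨P.get ⟨i.val, by omega⟩, List.get_mem _ _, ?_⟩
  have hz : (P.zip A).get ⟨i.val, by simp [List.length_zip]; omega⟩ =
      (P.get ⟨i.val, by omega⟩, A.get ⟨i.val, i.isLt⟩) := by
    simp [List.getElem_zip]
  rw [← hi, List.mem_iff_get]
  exact ⟨_, hz⟩

/-- All the structural facts about a cactus needed for the reduction bookkeeping. -/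
lemma cactus_pack {A B P Q : List ℕ} {vH h : ℕ}
    (hphy : N.IsPhyloNet X) (hnest : N.OneNested)
    (hcd : N.IsCactusData X A B z vH h P Q) :
    ∀ R : Finset ℕ, R = insert h (P ++ Q).toFinset ∪ (cactusSupport A B z).erase z →
    (∀ a ∈ N.arcs, a.1 ∈ R → a.2 ∈ R ∨ a = (h, z)) ∧
    (∀ a ∈ N.arcs, a.2 ∈ R → a.1 ∈ R ∨ a.1 = vH) ∧
    (∃ e1 e2 : ℕ, e1 ≠ e2 ∧ e1 ∈ R ∧ e2 ∈ R ∧ (vH, e1) ∈ N.arcs ∧ (vH, e2) ∈ N.arcs ∧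
      ∀ y, (vH, y) ∈ N.arcs → y ∈ R → (y = e1 ∨ y = e2)) ∧
    (z ∉ R ∧ vH ∉ R ∧ N.root ∉ R ∧ (vH, z) ∉ N.arcs ∧ z ∈ X ∧ vH ∉ X ∧ vH ∈ N.verts ∧
      2 ≤ N.outdeg vH) ∧
    (R ⊆ N.verts ∧ ∀ x ∈ X, x ∈ R → x ∈ (cactusSupport A B z).erase z) ∧
    (z ∈ cactusSupport A B z ∧ cactusSupport A B z ⊆ X) := by
  classical
  intro R hR
  obtain ⟨lp, ls, hlp?, hls?, hlp_ne_ls, harclph, harclsh, hpar⟩ :=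
    cactus_parents hphy hnest hcd
  obtain ⟨hA, hndX, hXmem, hPA, hQB, hchP, hchQ, hndV, hvmem, houth, harczh, hzipP, hzipQ, hdeg⟩
    := hcd
  have hend := hphy.1
  have hac := hphy.2.1
  have hphy' := hphy
  have hPne : P ≠ [] := by
    intro h0
    rw [h0] at hPA
    exact hA (List.length_eq_zero_iff.mp hPA.symm)
  -- nodup components
  have hndV1 := List.nodup_cons.mp hndV
  have hndV2 := List.nodup_cons.mp hndV1.2
  have hvh_ne : vH ≠ h := by
    intro h0; exact hndV1.1 (by simp [h0])
  have hvH_nP : vH ∉ P := fun h0 => hndV1.1 (by simp [h0])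
  have hvH_nQ : vH ∉ Q := fun h0 => hndV1.1 (by simp [h0])
  have hh_nP : h ∉ P := fun h0 => hndV2.1 (by simp [h0])
  have hh_nQ : h ∉ Q := fun h0 => hndV2.1 (by simp [h0])
  -- X facts
  have hh_nX : h ∉ X := tail_not_mem_X hphy' harczh
  have hPQ_nX : ∀ u ∈ P ++ Q, u ∉ X := by
    intro u hu hX
    have h1 := (leaf_of_mem_X hphy' hX).2
    have h2 := (hdeg u hu).2
    omega
  have hA_X : ∀ a ∈ A, a ∈ X := fun a ha => hXmem a (by simp [ha])
  have hB_X : ∀ b ∈ B, b ∈ X := fun b hb => hXmem b (by simp [hb])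
  have hz_X : z ∈ X := hXmem z (by simp)
  have hz_nA : z ∉ A := by
    intro hzA
    have hnd := hndX
    rw [List.nodup_append'] at hnd
    exact hnd.2.2 (List.mem_append.mpr (Or.inl hzA)) (by simp)
  have hz_nB : z ∉ B := by
    intro hzB
    have hnd := hndX
    rw [List.nodup_append'] at hnd
    exact hnd.2.2 (List.mem_append.mpr (Or.inr hzB)) (by simp)
  have hsupp : cactusSupport A B z = (A ++ B ++ [z]).toFinset := rfl
  have hsupp_X : cactusSupport A B z ⊆ X := by
    intro x hx
    rw [hsupp, List.mem_toFinset] at hx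
    exact hXmem x hx
  have hz_supp : z ∈ cactusSupport A B z := by
    rw [hsupp, List.mem_toFinset]; simp
  -- membership in R
  have hmemR : ∀ y : ℕ, y ∈ R ↔ (y = h ∨ y ∈ P ++ Q ∨ (y ∈ A ∨ y ∈ B)) := by
    intro y
    rw [hR]
    simp only [Finset.mem_union, Finset.mem_insert, List.mem_toFinset, Finset.mem_erase,
      hsupp, List.mem_toFinset, List.mem_append, List.mem_singleton]
    constructor
    · rintro ((h1 | h1) | ⟨h1, (h2 | h2) | h2⟩)
      · exact Or.inl h1
      · exact Or.inr (Or.inl h1)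
      · exact Or.inr (Or.inr (Or.inl h2))
      · exact Or.inr (Or.inr (Or.inr h2))
      · exact absurd h2 h1
    · rintro (h1 | h1 | h1 | h1)
      · exact Or.inl (Or.inl h1)
      · exact Or.inl (Or.inr h1)
      · refine Or.inr ⟨?_, Or.inl (Or.inl h1)⟩
        intro h0
        exact hz_nA (h0 ▸ h1)
      · refine Or.inr ⟨?_, Or.inl (Or.inr h1)⟩
        intro h0
        exact hz_nB (h0 ▸ h1)
  -- pendant in-arc facts
  have hA_in : ∀ a ∈ A, ∃ p ∈ P, (p, a) ∈ N.arcs := by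
    intro a ha
    obtain ⟨p, hp, hp2⟩ := mem_zip_of_mem_right hPA ha
    exact ⟨p, hp, hzipP _ hp2⟩
  have hB_in : ∀ b ∈ B, ∃ p ∈ Q, (p, b) ∈ N.arcs := by
    intro b hb
    obtain ⟨p, hp, hp2⟩ := mem_zip_of_mem_right hQB hb
    exact ⟨p, hp, hzipQ _ hp2⟩
  have hlpP : lp ∈ P := by
    have := List.getLast_mem (l := P) hPne
    rw [getLast_eq' hPne hlp?] at this
    exact this
  have hlsQ : ls = vH ∨ ls ∈ Q := by
    have := List.getLast_mem (List.cons_ne_nil vH Q)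
    rw [getLast_eq' (List.cons_ne_nil vH Q) hls?] at this
    simpa using this
  have hvH_nX : vH ∉ X := by
    apply tail_not_mem_X hphy' (x := P.head hPne)
    cases P with
    | nil => exact absurd rfl hPne
    | cons p0 P' => exact (List.isChain_cons_cons.mp hchP).1
  -- C1 : arcs out of R
  have hC1 : ∀ a ∈ N.arcs, a.1 ∈ R → a.2 ∈ R ∨ a = (h, z) := by
    intro a ha h1
    rcases (hmemR a.1).mp h1 with h2 | h2 | h2 | h2
    · -- a.1 = h
      right
      have : a.2 = z := outdeg_one_unique houth (by rw [← h2]; exact ha) harczh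
      rw [← h2, ← this]
    · -- a.1 ∈ P ++ Q : interior vertex, out-arcs go to cycle or pendant
      left
      rcases List.mem_append.mp h2 with h3 | h3
      · -- in P
        obtain ⟨pend, hp1, hp2⟩ := mem_zip_of_mem_left hPA h3
        have harcp : (a.1, pend) ∈ N.arcs := hzipP _ hp2
        by_cases hlast : P.getLast? = some a.1
        · have hlpa : a.1 = lp := by
            rw [hlp?] at hlast
            exact (Option.some.inj hlast).symm
          have hdua := (hdeg a.1 (by simp [h3])).2
          have hpend_ne : h ≠ pend := fun h0 => hh_nX (h0 ▸ hA_X pend hp1)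
          rcases outdeg_two_cases hdua (hlpa ▸ harclph) harcp hpend_ne
            (show (a.1, a.2) ∈ N.arcs from ha) with h4 | h4
          · rw [(hmemR a.2)]
            exact Or.inl h4
          · rw [(hmemR a.2)]
            exact Or.inr (Or.inr (Or.inl (h4 ▸ hp1)))
        · obtain ⟨nxt, hn1, hn2⟩ := chain_next hchP.tail h3 hlast
          have hnxt_ne : nxt ≠ pend := by
            intro h0
            exact hPQ_nX nxt (by simp [hn1]) (h0 ▸ hA_X pend hp1)
          have hdua := (hdeg a.1 (by simp [h3])).2
          rcases outdeg_two_cases hdua hn2 harcp hnxt_ne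
            (show (a.1, a.2) ∈ N.arcs from ha) with h4 | h4
          · rw [(hmemR a.2)]
            exact Or.inr (Or.inl (by simp [h4 ▸ hn1]))
          · rw [(hmemR a.2)]
            exact Or.inr (Or.inr (Or.inl (h4 ▸ hp1)))
      · -- in Q
        obtain ⟨pend, hp1, hp2⟩ := mem_zip_of_mem_left hQB h3
        have harcp : (a.1, pend) ∈ N.arcs := hzipQ _ hp2
        have hQne : Q ≠ [] := List.ne_nil_of_mem h3
        have hlsQ' : Q.getLast? = some ls := by
          rw [← hls?, List.getLast?_eq_getLast (List.cons_ne_nil _ _),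
            List.getLast_cons hQne, List.getLast?_eq_getLast hQne]
        by_cases hlast : Q.getLast? = some a.1
        · have hlpa : a.1 = ls := by
            rw [hlsQ'] at hlast
            exact (Option.some.inj hlast).symm
          have hdua := (hdeg a.1 (by simp [h3])).2
          have hpend_ne : h ≠ pend := fun h0 => hh_nX (h0 ▸ hB_X pend hp1)
          rcases outdeg_two_cases hdua (hlpa ▸ harclsh) harcp hpend_ne
            (show (a.1, a.2) ∈ N.arcs from ha) with h4 | h4
          · rw [(hmemR a.2)]
            exact Or.inl h4
          · rw [(hmemR a.2)]
            exact Or.inr (Or.inr (Or.inr (h4 ▸ hp1)))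
        · obtain ⟨nxt, hn1, hn2⟩ := chain_next hchQ.tail h3 hlast
          have hnxt_ne : nxt ≠ pend := by
            intro h0
            exact hPQ_nX nxt (by simp [hn1]) (h0 ▸ hB_X pend hp1)
          have hdua := (hdeg a.1 (by simp [h3])).2
          rcases outdeg_two_cases hdua hn2 harcp hnxt_ne
            (show (a.1, a.2) ∈ N.arcs from ha) with h4 | h4
          · rw [(hmemR a.2)]
            exact Or.inr (Or.inl (by simp [h4 ▸ hn1]))
          · rw [(hmemR a.2)]
            exact Or.inr (Or.inr (Or.inr (h4 ▸ hp1)))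
    · -- a.1 ∈ A : leaf, no out-arcs
      exact absurd ha (fun ha2 =>
        no_out_of_outdeg_zero (leaf_of_mem_X hphy' (hA_X _ h2)).2 ha2)
    · exact absurd ha (fun ha2 =>
        no_out_of_outdeg_zero (leaf_of_mem_X hphy' (hB_X _ h2)).2 ha2)
  -- C2 : arcs into R
  have hC2 : ∀ a ∈ N.arcs, a.2 ∈ R → a.1 ∈ R ∨ a.1 = vH := by
    intro a ha h1
    rcases (hmemR a.2).mp h1 with h2 | h2 | h2 | h2
    · -- a.2 = h
      rcases hpar a.1 (by rw [← h2]; exact ha) with h3 | h3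
      · left; rw [hmemR]; exact Or.inr (Or.inl (by simp [h3 ▸ hlpP]))
      · rcases hlsQ with h4 | h4
        · right; rw [h3, h4]
        · left; rw [hmemR]; exact Or.inr (Or.inl (by simp [h3 ▸ h4]))
    · -- a.2 ∈ P ++ Q : indegree one, predecessor on the cycle
      rcases List.mem_append.mp h2 with h3 | h3
      · obtain ⟨pr, hp1, hp2⟩ := chain_pred hchP (by simp [h3] : a.2 ∈ P ++ [h])
        have := indeg_one_unique (hdeg a.2 (by simp [h3])).1 ha hp1
        rcases hp2 with h4 | h4
        · right; rw [this, h4]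
        · left; rw [hmemR]
          rcases List.mem_append.mp h4 with h5 | h5
          · exact Or.inr (Or.inl (by simp [this ▸ h5]))
          · simp only [List.mem_singleton] at h5
            exact Or.inl (this.trans h5)
      · obtain ⟨pr, hp1, hp2⟩ := chain_pred hchQ (by simp [h3] : a.2 ∈ Q ++ [h])
        have := indeg_one_unique (hdeg a.2 (by simp [h3])).1 ha hp1
        rcases hp2 with h4 | h4
        · right; rw [this, h4]
        · left; rw [hmemR]
          rcases List.mem_append.mp h4 with h5 | h5
          · exact Or.inr (Or.inl (by simp [this ▸ h5]))
          · simp only [List.mem_singleton] at h5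
            exact Or.inl (this.trans h5)
    · -- a.2 ∈ A
      obtain ⟨p, hp, hp2⟩ := hA_in a.2 h2
      have := indeg_one_unique (leaf_of_mem_X hphy' (hA_X _ h2)).1 ha hp2
      left; rw [hmemR]; exact Or.inr (Or.inl (by simp [this ▸ hp]))
    · obtain ⟨p, hp, hp2⟩ := hB_in a.2 h2
      have := indeg_one_unique (leaf_of_mem_X hphy' (hB_X _ h2)).1 ha hp2
      left; rw [hmemR]; exact Or.inr (Or.inl (by simp [this ▸ hp]))
  -- C3 : the two cycle arcs out of vH
  have harcvHP : (vH, P.head hPne) ∈ N.arcs := by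
    cases P with
    | nil => exact absurd rfl hPne
    | cons p0 P' => exact (List.isChain_cons_cons.mp hchP).1
  have harcvHQ : (vH, (Q ++ [h]).head (by simp)) ∈ N.arcs := by
    cases Q with
    | nil => simpa [Net.ArcRel] using (List.isChain_cons_cons.mp hchQ).1
    | cons q0 Q' => exact (List.isChain_cons_cons.mp hchQ).1
  have hC3 : ∃ e1 e2 : ℕ, e1 ≠ e2 ∧ e1 ∈ R ∧ e2 ∈ R ∧ (vH, e1) ∈ N.arcs ∧
      (vH, e2) ∈ N.arcs ∧ ∀ y, (vH, y) ∈ N.arcs → y ∈ R → (y = e1 ∨ y = e2) := by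
    refine ⟨P.head hPne, (Q ++ [h]).head (by simp), ?_, ?_, ?_, harcvHP, harcvHQ, ?_⟩
    · -- distinct
      cases Q with
      | nil =>
        intro h0
        have h1 : P.head hPne = h := h0
        exact hh_nP (by rw [← h1]; exact List.head_mem hPne)
      | cons q0 Q' =>
        intro h0
        have h1 : P.head hPne ∈ P := List.head_mem hPne
        have h0' : P.head hPne = q0 := h0
        have h2 := (List.nodup_append'.mp hndV2.2).2.2 h1
        exact h2 (by rw [h0']; simp)
    · rw [hmemR]
      exact Or.inr (Or.inl (by simp [List.head_mem hPne]))
    · rw [hmemR]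
      cases Q with
      | nil => exact Or.inl rfl
      | cons q0 Q' =>
        exact Or.inr (Or.inl (by simp [show ((q0 :: Q' : List ℕ) ++ [h]).head (by simp) = q0 from rfl]))
    · intro y hy hyR
      rcases (hmemR y).mp hyR with h2 | h2 | h2 | h2
      · -- y = h : possible only when Q = []
        subst h2
        rcases hpar vH hy with h3 | h3
        · exact absurd (h3 ▸ hlpP) hvH_nP
        · right
          cases Q with
          | nil => rfl
          | cons q0 Q' =>
            exfalso
            have h6 : ls = (q0 :: Q').getLast (List.cons_ne_nil _ _) := by
              have h7 := getLast_eq' (List.cons_ne_nil vH (q0 :: Q')) hls?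
              rw [← h7, List.getLast_cons (List.cons_ne_nil _ _)]
            have h8 : ls ∈ q0 :: Q' := by
              rw [h6]; exact List.getLast_mem _
            exact hvH_nQ (h3 ▸ h8)
      · rcases List.mem_append.mp h2 with h3 | h3
        · -- y ∈ P : must be the head
          left
          by_cases hhead : (P ++ [h]).head? = some y
          · cases P with
            | nil => exact absurd rfl hPne
            | cons p0 P' =>
              simp only [List.cons_append, List.head?_cons, Option.some.injEq] at hhead
              rw [← hhead]; rfl
          · exfalso
            obtain ⟨pr, hp1, hp2⟩ := chain_pred_of_ne_head hchP (by simp [h3]) hhead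
            have := indeg_one_unique (hdeg y (by simp [h3])).1 hy hp2
            rcases List.mem_append.mp hp1 with h5 | h5
            · exact hvH_nP (this ▸ h5)
            · simp only [List.mem_singleton] at h5
              exact hvh_ne (this.trans h5)
        · -- y ∈ Q : must be the head
          right
          have hQne : Q ≠ [] := List.ne_nil_of_mem h3
          by_cases hhead : (Q ++ [h]).head? = some y
          · cases Q with
            | nil => exact absurd rfl hQne
            | cons q0 Q' =>
              simp only [List.cons_append, List.head?_cons, Option.some.injEq] at hhead
              rw [← hhead]; rfl
          · exfalso
            obtain ⟨pr, hp1, hp2⟩ := chain_pred_of_ne_head hchQ (by simp [h3]) hhead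
            have := indeg_one_unique (hdeg y (by simp [h3])).1 hy hp2
            rcases List.mem_append.mp hp1 with h5 | h5
            · exact hvH_nQ (this ▸ h5)
            · simp only [List.mem_singleton] at h5
              exact hvh_ne (this.trans h5)
      · -- y ∈ A : impossible
        exfalso
        obtain ⟨p, hp, hp2⟩ := hA_in y h2
        have := indeg_one_unique (leaf_of_mem_X hphy' (hA_X _ h2)).1 hy hp2
        exact hvH_nP (this ▸ hp)
      · exfalso
        obtain ⟨p, hp, hp2⟩ := hB_in y h2
        have := indeg_one_unique (leaf_of_mem_X hphy' (hB_X _ h2)).1 hy hp2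
        exact hvH_nQ (this ▸ hp)
  -- C4
  have hz_nR : z ∉ R := by
    rw [hmemR]
    push_neg
    refine ⟨fun h0 => hh_nX (h0 ▸ hz_X), fun h0 => hPQ_nX z h0 hz_X, ?_, ?_⟩
    · exact fun h0 => hz_nA h0
    · exact fun h0 => hz_nB h0
  have hvH_nR : vH ∉ R := by
    rw [hmemR]
    push_neg
    exact ⟨hvh_ne, by simp [hvH_nP, hvH_nQ], fun h0 => hvH_nX (hA_X _ h0),
      fun h0 => hvH_nX (hB_X _ h0)⟩
  have hroot_nR : N.root ∉ R := by
    rw [hmemR]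
    push_neg
    have hrind := hphy'.2.2.2.2.1
    refine ⟨?_, ?_, fun h0 => root_not_mem_X hphy' (hA_X _ h0),
      fun h0 => root_not_mem_X hphy' (hB_X _ h0)⟩
    · intro h0
      have := indeg_pos harclph
      rw [← h0] at this
      rw [hphy'.2.2.2.1] at this
      omega
    · intro h0
      have := (hdeg _ h0).1
      rw [hphy'.2.2.2.1] at this
      omega
  have hvHz_narc : (vH, z) ∉ N.arcs := by
    intro h0
    have := indeg_one_unique (leaf_of_mem_X hphy' hz_X).1 h0 harczh
    exact hvh_ne this
  have houtvH : 2 ≤ N.outdeg vH := by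
    obtain ⟨e1, e2, he12, _, _, ha1, ha2, _⟩ := hC3
    exact two_le_outdeg ha1 ha2 he12
  -- C5
  have hRsub : R ⊆ N.verts := by
    intro x hx
    rcases (hmemR x).mp hx with h1 | h1 | h1 | h1
    · exact hvmem x (by simp [h1])
    · exact hvmem x (by simp [h1])
    · exact hphy'.2.2.2.2.2.1 (hA_X _ h1)
    · exact hphy'.2.2.2.2.2.1 (hB_X _ h1)
  have hXR : ∀ x ∈ X, x ∈ R → x ∈ (cactusSupport A B z).erase z := by
    intro x hx hxR
    rcases (hmemR x).mp hxR with h1 | h1 | h1 | h1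
    · exact absurd (h1 ▸ hx) hh_nX
    · exact absurd hx (hPQ_nX x h1)
    · refine Finset.mem_erase.mpr ⟨?_, by rw [hsupp, List.mem_toFinset]; simp [h1]⟩
      intro h0
      exact hz_nA (h0 ▸ h1)
    · refine Finset.mem_erase.mpr ⟨?_, by rw [hsupp, List.mem_toFinset]; simp [h1]⟩
      intro h0
      exact hz_nB (h0 ▸ h1)
  exact ⟨hC1, hC2, hC3, ⟨hz_nR, hvH_nR, hroot_nR, hvHz_narc, hz_X, hvH_nX,
    hvmem vH (by simp), houtvH⟩, ⟨hRsub, hXR⟩, hz_supp, hsupp_X⟩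

lemma mod_helper (n m : ℕ) (hn : 3 ≤ n) (hm : m < n) :
    ((m + (n-1)) % n + 1) % n = m ∧ (m+1) % n ≠ (m + (n-1)) % n := by
  rcases Nat.eq_zero_or_pos m with rfl | hm0
  · have e1 : (0 + (n-1)) % n = n - 1 := by
      rw [Nat.zero_add, Nat.mod_eq_of_lt (by omega)]
    constructor
    · rw [e1]
      have e2 : n - 1 + 1 = n := by omega
      rw [e2, Nat.mod_self]
    · rw [e1, Nat.zero_add, Nat.mod_eq_of_lt (by omega)]
      omega
  · have h1 : m + (n-1) = n + (m-1) := by omega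
    have h2 : (m + (n-1)) % n = m - 1 := by
      rw [h1, Nat.add_mod_left, Nat.mod_eq_of_lt (by omega)]
    constructor
    · rw [h2]
      have e3 : m - 1 + 1 = m := by omega
      rw [e3, Nat.mod_eq_of_lt hm]
    · rw [h2]
      by_cases h3 : m + 1 < n
      · rw [Nat.mod_eq_of_lt h3]; omega
      · have e4 : m + 1 = n := by omega
        rw [e4, Nat.mod_self]; omega

/-- The (non-isolated) cactus reduction case. -/
lemma cactus_case {A B P Q : List ℕ} {vH h : ℕ}
    (hphy : N.IsPhyloNet X) (hnest : N.OneNested)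
    (hcd : N.IsCactusData X A B z vH h P Q) (hniso : ¬ N.IsIsolatedAt vH) :
    (N.cactusRed (insert h (P ++ Q).toFinset) (cactusSupport A B z) z vH).IsPhyloNet
      (X \ (cactusSupport A B z).erase z) ∧
    (N.cactusRed (insert h (P ++ Q).toFinset) (cactusSupport A B z) z vH).OneNested := by
  classical
  set S := cactusSupport A B z with hS
  set R : Finset ℕ := insert h (P ++ Q).toFinset ∪ S.erase z with hRdef
  obtain ⟨K1, K2, ⟨e1, e2, he12, he1R, he2R, harce1, harce2, hvHout⟩,
    ⟨hz_nR, hvH_nR, hroot_nR, hvHz_narc, hz_X, hvH_nX, hvH_verts, houtvH2⟩,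
    ⟨hRsub, hXR⟩, hz_supp, hsupp_X⟩ := cactus_pack hphy hnest hcd R rfl
  obtain ⟨hend, hac, hroot, hrind, huniq, hXsub, hleaf, htree, hhyb⟩ := hphy
  have hphy' : N.IsPhyloNet X :=
    ⟨hend, hac, hroot, hrind, huniq, hXsub, hleaf, htree, hhyb⟩
  have hzarc : (h, z) ∈ N.arcs := hcd.2.2.2.2.2.2.2.2.2.2.1
  have hh_R : h ∈ R := by rw [hRdef]; simp
  have hz_leaf : N.IsLeaf z := leaf_of_mem_X hphy' hz_X
  set M := N.cactusRed (insert h (P ++ Q).toFinset) S z vH with hM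
  set F : Finset (ℕ × ℕ) := N.arcs.filter fun a => a.1 ∉ R ∧ a.2 ∉ R with hF
  have hMarcs : M.arcs = insert (vH, z) F := rfl
  have hMverts : M.verts = N.verts \ R := rfl
  have hvHz_nF : (vH, z) ∉ F := by
    intro h0
    exact hvHz_narc (Finset.mem_filter.mp h0).1
  have hFsub : F ⊆ N.arcs := Finset.filter_subset _ _
  have hz_ne_vH : z ≠ vH := fun h0 => hvH_nX (h0 ▸ hz_X)
  have hroot_ne_z : N.root ≠ z := fun h0 => root_not_mem_X hphy' (h0 ▸ hz_X)
  -- no arcs out of z in M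
  have hnoz : ∀ y : ℕ, (z, y) ∉ M.arcs := by
    intro y h0
    rw [hMarcs] at h0
    rcases Finset.mem_insert.mp h0 with h1 | h1
    · exact hz_ne_vH (congrArg Prod.fst h1)
    · exact no_out_of_outdeg_zero hz_leaf.2 (hFsub h1)
  -- degree computations
  have hindeg_z : M.indeg z = 1 := by
    show (M.arcs.filter fun a => a.2 = z).card = 1
    have : M.arcs.filter (fun a => a.2 = z) = {(vH, z)} := by
      ext a
      rw [hMarcs]
      simp only [Finset.mem_filter, Finset.mem_insert, Finset.mem_singleton]
      constructor
      · rintro ⟨h1 | h1, h2⟩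
        · exact h1
        · exfalso
          obtain ⟨ha, hp1, hp2⟩ := Finset.mem_filter.mp h1
          have : a.1 = h := indeg_one_unique hz_leaf.1 (by rw [← h2]; exact ha) hzarc
          exact hp1 (this ▸ hh_R)
      · rintro rfl
        exact ⟨Or.inl rfl, rfl⟩
    rw [this, Finset.card_singleton]
  have hindeg_ne : ∀ v : ℕ, v ∉ R → v ≠ z → M.indeg v = N.indeg v := by
    intro v hvR hvz
    show (M.arcs.filter fun a => a.2 = v).card = _
    rw [hMarcs, Finset.filter_insert, if_neg (by simpa using fun h0 => hvz h0.symm)]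
    show ((N.arcs.filter _).filter fun a => a.2 = v).card = _
    rw [Finset.filter_filter]
    congr 1
    apply Finset.filter_congr
    intro a ha
    constructor
    · exact fun h0 => h0.2
    · intro h0
      refine ⟨⟨?_, h0 ▸ hvR⟩, h0⟩
      intro h1
      rcases K1 a ha h1 with h2 | h2
      · exact (h0 ▸ hvR) h2
      · exact hvz (by rw [← h0, h2])
  have houtdeg_z : M.outdeg z = 0 := by
    show (M.arcs.filter fun a => a.1 = z).card = 0
    rw [Finset.card_eq_zero]
    apply Finset.eq_empty_iff_forall_notMem.mpr
    intro a ha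
    obtain ⟨h1, h2⟩ := Finset.mem_filter.mp ha
    exact hnoz a.2 (by rw [← h2]; exact h1)
  have houtdeg_ne : ∀ v : ℕ, v ∉ R → v ≠ vH → M.outdeg v = N.outdeg v := by
    intro v hvR hvvH
    show (M.arcs.filter fun a => a.1 = v).card = _
    rw [hMarcs, Finset.filter_insert, if_neg (by simpa using fun h0 => hvvH h0.symm)]
    show ((N.arcs.filter _).filter fun a => a.1 = v).card = _
    rw [Finset.filter_filter]
    congr 1
    apply Finset.filter_congr
    intro a ha
    constructor
    · exact fun h0 => h0.2
    · intro h0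
      refine ⟨⟨h0 ▸ hvR, ?_⟩, h0⟩
      intro h1
      rcases K2 a ha h1 with h2 | h2
      · exact (h0 ▸ hvR) h2
      · exact hvvH (h0.symm.trans h2)
  have houtdeg_vH : M.outdeg vH + 1 = N.outdeg vH := by
    have hsplit := Finset.card_filter_add_card_filter_not
      (s := N.arcs.filter fun a => a.1 = vH) (p := fun a => a.1 ∉ R ∧ a.2 ∉ R)
    have hpos : ((N.arcs.filter fun a => a.1 = vH).filter fun a => a.1 ∉ R ∧ a.2 ∉ R)
        = F.filter fun a => a.1 = vH := by
      rw [hF, Finset.filter_filter, Finset.filter_filter]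
      apply Finset.filter_congr
      intro a ha
      constructor
      · exact fun h0 => ⟨h0.2, h0.1⟩
      · exact fun h0 => ⟨h0.2, h0.1⟩
    have hneg : ((N.arcs.filter fun a => a.1 = vH).filter fun a => ¬(a.1 ∉ R ∧ a.2 ∉ R))
        = {(vH, e1), (vH, e2)} := by
      ext a
      simp only [Finset.mem_filter, Finset.mem_insert, Finset.mem_singleton, not_and, not_not]
      constructor
      · rintro ⟨⟨ha, h1⟩, h2⟩
        have h3 : a.2 ∈ R := h2 (h1 ▸ hvH_nR)
        have h4 : (vH, a.2) ∈ N.arcs := by rw [← h1]; exact ha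
        rcases hvHout a.2 h4 h3 with h5 | h5
        · left; rw [← h1, ← h5]
        · right; rw [← h1, ← h5]
      · rintro (rfl | rfl)
        · exact ⟨⟨harce1, rfl⟩, fun _ => he1R⟩
        · exact ⟨⟨harce2, rfl⟩, fun _ => he2R⟩
    have hnegcard : ({(vH, e1), (vH, e2)} : Finset (ℕ × ℕ)).card = 2 := by
      rw [Finset.card_insert_of_notMem (by simp [he12]), Finset.card_singleton]
    rw [hpos, hneg, hnegcard] at hsplit
    have hMout : M.outdeg vH = 1 + (F.filter fun a => a.1 = vH).card := by
      show (M.arcs.filter fun a => a.1 = vH).card = _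
      rw [hMarcs, Finset.filter_insert, if_pos rfl,
        Finset.card_insert_of_notMem (by
          intro h0
          exact hvHz_nF (Finset.mem_filter.mp h0).1)]
      omega
    rw [outArcs_def N vH]
    omega
  -- acyclicity
  have hclaim : ∀ v w : ℕ, Relation.TransGen M.ArcRel v w →
      w = z ∨ Relation.TransGen N.ArcRel v w := by
    intro v w hvw
    induction hvw with
    | @single b h0 =>
      rcases Finset.mem_insert.mp (show (v, b) ∈ insert (vH, z) F from h0) with h1 | h1
      · exact Or.inl (congrArg Prod.snd h1)
      · exact Or.inr (Relation.TransGen.single (hFsub h1))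
    | @tail b c _ h0 ih =>
      rcases ih with h1 | h1
      · exfalso
        apply hnoz c
        rw [← h1]
        exact h0
      · rcases Finset.mem_insert.mp (show (b, c) ∈ insert (vH, z) F from h0) with h2 | h2
        · exact Or.inl (congrArg Prod.snd h2)
        · exact Or.inr (h1.tail (hFsub h2))
  have hMacyc : ∀ v : ℕ, ¬ Relation.TransGen M.ArcRel v v := by
    intro v hv
    rcases hclaim v v hv with h1 | h1
    · subst h1
      obtain ⟨c, hc⟩ := transGen_head hv
      exact hnoz c hc
    · exact hac v h1
  -- cycle transfer
  have htransfer : ∀ C : Finset ℕ, M.IsCycle C → N.IsCycle C := by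
    intro C hC
    obtain ⟨n, hn, f, hinj, himg, hadj⟩ := hC
    have hznbr : ∀ u : ℕ, M.Adj z u → u = vH := by
      intro u hu
      rcases hu with h1 | h1
      · exact absurd h1 (hnoz u)
      · rcases Finset.mem_insert.mp (hMarcs ▸ h1) with h2 | h2
        · exact congrArg Prod.fst h2
        · exfalso
          obtain ⟨ha, hp1, hp2⟩ := Finset.mem_filter.mp h2
          have : u = h := indeg_one_unique hz_leaf.1 ha hzarc
          exact hp1 (by simpa using this ▸ hh_R)
    have hzC : ∀ i : Fin n, f i ≠ z := by
      intro i hi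
      obtain ⟨key1, key2⟩ := mod_helper n i.val hn i.isLt
      set j : Fin n := ⟨(i.val + 1) % n, Nat.mod_lt _ (by omega)⟩ with hj
      set k : Fin n := ⟨(i.val + (n-1)) % n, Nat.mod_lt _ (by omega)⟩ with hk
      have hadj1 : M.Adj z (f j) := hi ▸ hadj i
      have hadj2 : M.Adj (f k) (f ⟨(k.val + 1) % n, Nat.mod_lt _ (by omega)⟩) := hadj k
      have hki : (⟨(k.val + 1) % n, Nat.mod_lt _ (by omega)⟩ : Fin n) = i := Fin.ext key1
      rw [hki, hi] at hadj2
      have h1 : f j = vH := hznbr _ hadj1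
      have h2 : f k = vH := hznbr _ hadj2.symm
      have : j = k := hinj (h1.trans h2.symm)
      have := congrArg Fin.val this
      simp only [hj, hk] at this
      exact key2 this
    refine ⟨n, hn, f, hinj, himg, fun i => ?_⟩
    have hadji := hadj i
    rcases hadji with h1 | h1
    · rcases Finset.mem_insert.mp (hMarcs ▸ h1) with h2 | h2
      · exfalso
        exact hzC _ (congrArg Prod.snd h2)
      · exact Or.inl (hFsub h2)
    · rcases Finset.mem_insert.mp (hMarcs ▸ h1) with h2 | h2
      · exfalso
        exact hzC i (congrArg Prod.snd h2)
      · exact Or.inr (hFsub h2)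
  constructor
  · refine ⟨?_, hMacyc, ?_, ?_, ?_, ?_, ?_, ?_, ?_⟩
    · intro a ha
      rcases Finset.mem_insert.mp (hMarcs ▸ ha) with h1 | h1
      · rw [h1]
        exact ⟨Finset.mem_sdiff.mpr ⟨hvH_verts, hvH_nR⟩,
          Finset.mem_sdiff.mpr ⟨hXsub hz_X, hz_nR⟩⟩
      · obtain ⟨ha2, hp1, hp2⟩ := Finset.mem_filter.mp h1
        exact ⟨Finset.mem_sdiff.mpr ⟨(hend a ha2).1, hp1⟩,
          Finset.mem_sdiff.mpr ⟨(hend a ha2).2, hp2⟩⟩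
    · exact Finset.mem_sdiff.mpr ⟨hroot, hroot_nR⟩
    · rw [show M.root = N.root from rfl, hindeg_ne _ hroot_nR hroot_ne_z]
      exact hrind
    · intro v hv hind
      have hv2 := Finset.mem_sdiff.mp hv
      by_cases hvz : v = z
      · rw [hvz, hindeg_z] at hind
        omega
      · rw [hindeg_ne _ hv2.2 hvz] at hind
        exact huniq v hv2.1 hind
    · intro x hx
      have hx2 := Finset.mem_sdiff.mp hx
      refine Finset.mem_sdiff.mpr ⟨hXsub hx2.1, ?_⟩
      intro h0
      exact hx2.2 (hXR x hx2.1 h0)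
    · intro v hv
      have hv2 := Finset.mem_sdiff.mp hv
      by_cases hvz : v = z
      · rw [hvz]
        constructor
        · intro _
          exact Finset.mem_sdiff.mpr ⟨hz_X, fun h0 => (Finset.mem_erase.mp h0).1 rfl⟩
        · intro _
          exact ⟨hindeg_z, houtdeg_z⟩
      · by_cases hvvH : v = vH
        · subst hvvH
          constructor
          · intro hl
            exfalso
            have := hl.2
            omega
          · intro hm
            exact absurd (Finset.mem_sdiff.mp hm).1 hvH_nX
        · unfold IsLeaf
          rw [hindeg_ne _ hv2.2 hvz, houtdeg_ne _ hv2.2 hvvH]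
          constructor
          · intro hl
            refine Finset.mem_sdiff.mpr ⟨(hleaf v hv2.1).mp hl, ?_⟩
            intro h0
            exact hv2.2 (Finset.mem_union_right _ h0)
          · intro hm
            exact (hleaf v hv2.1).mpr (Finset.mem_sdiff.mp hm).1
    · intro v hv hvr hout hind
      have hv2 := Finset.mem_sdiff.mp hv
      by_cases hvz : v = z
      · rw [hvz, houtdeg_z] at hout
        omega
      · by_cases hvvH : v = vH
        · rw [hvvH] at hind hout ⊢
          rw [hindeg_ne _ hvH_nR hz_ne_vH.symm] at hind
          have hne2 : N.outdeg vH ≠ 2 := by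
            intro h0
            exact hniso ⟨hind, h0⟩
          omega
        · rw [hindeg_ne _ hv2.2 hvz] at hind
          rw [houtdeg_ne _ hv2.2 hvvH] at hout ⊢
          exact htree v hv2.1 hvr hout hind
    · intro v hv hind
      have hv2 := Finset.mem_sdiff.mp hv
      by_cases hvz : v = z
      · rw [hvz, hindeg_z] at hind
        omega
      · by_cases hvvH : v = vH
        · rw [hvvH]
          omega
        · rw [hindeg_ne _ hv2.2 hvz] at hind
          rw [houtdeg_ne _ hv2.2 hvvH]
          exact hhyb v hv2.1 hind
  · intro C₁ C₂ h1 h2 hne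
    exact hnest C₁ C₂ (htransfer C₁ h1) (htransfer C₂ h2) hne

/-- The isolated cactus reduction case. -/
lemma isoCactus_case {A B P Q : List ℕ} {vH h : ℕ}
    (hphy : N.IsPhyloNet X) (hnest : N.OneNested)
    (hcd : N.IsCactusData X A B z vH h P Q) (hiso : N.IsIsolatedAt vH) :
    (N.isoCactusRed (insert h (P ++ Q).toFinset) (cactusSupport A B z) z vH).IsPhyloNet
      (X \ (cactusSupport A B z).erase z) ∧
    (N.isoCactusRed (insert h (P ++ Q).toFinset) (cactusSupport A B z) z vH).OneNested := by
  classical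
  set S := cactusSupport A B z with hS
  set R : Finset ℕ := insert h (P ++ Q).toFinset ∪ S.erase z with hRdef
  obtain ⟨K1, K2, ⟨e1, e2, he12, he1R, he2R, harce1, harce2, hvHout⟩,
    ⟨hz_nR, hvH_nR, hroot_nR, hvHz_narc, hz_X, hvH_nX, hvH_verts, houtvH2⟩,
    ⟨hRsub, hXR⟩, hz_supp, hsupp_X⟩ := cactus_pack hphy hnest hcd R rfl
  obtain ⟨hend, hac, hroot, hrind, huniq, hXsub, hleaf, htree, hhyb⟩ := hphy
  have hphy' : N.IsPhyloNet X :=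
    ⟨hend, hac, hroot, hrind, huniq, hXsub, hleaf, htree, hhyb⟩
  obtain ⟨hisoin, hisoout⟩ := hiso
  have hzarc : (h, z) ∈ N.arcs := hcd.2.2.2.2.2.2.2.2.2.2.1
  have hh_R : h ∈ R := by rw [hRdef]; simp
  have hz_leaf : N.IsLeaf z := leaf_of_mem_X hphy' hz_X
  have hz_ne_vH : z ≠ vH := fun h0 => hvH_nX (h0 ▸ hz_X)
  have hroot_ne_z : N.root ≠ z := fun h0 => root_not_mem_X hphy' (h0 ▸ hz_X)
  have hvH_ne_root : vH ≠ N.root := by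
    intro h0
    rw [h0, hrind] at hisoin
    omega
  have hz_S : z ∈ S := hz_supp
  set F : Finset (ℕ × ℕ) := N.arcs.filter fun a => a.1 ∉ R ∧ a.2 ∉ R with hF
  set M₀ : Net := Net.mk ((N.verts \ R).erase z) F N.root with hM₀
  -- degrees in M₀
  have hindeg_ne : ∀ v : ℕ, v ∉ R → v ≠ z → M₀.indeg v = N.indeg v := by
    intro v hvR hvz
    show (F.filter fun a => a.2 = v).card = _
    rw [hF, Finset.filter_filter]
    congr 1
    apply Finset.filter_congr
    intro a ha
    constructor
    · exact fun h0 => h0.2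
    · intro h0
      refine ⟨⟨?_, h0 ▸ hvR⟩, h0⟩
      intro h1
      rcases K1 a ha h1 with h2 | h2
      · exact (h0 ▸ hvR) h2
      · exact hvz (by rw [← h0, h2])
  have houtdeg_ne : ∀ v : ℕ, v ∉ R → v ≠ vH → M₀.outdeg v = N.outdeg v := by
    intro v hvR hvvH
    show (F.filter fun a => a.1 = v).card = _
    rw [hF, Finset.filter_filter]
    congr 1
    apply Finset.filter_congr
    intro a ha
    constructor
    · exact fun h0 => h0.2
    · intro h0
      refine ⟨⟨h0 ▸ hvR, ?_⟩, h0⟩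
      intro h1
      rcases K2 a ha h1 with h2 | h2
      · exact (h0 ▸ hvR) h2
      · exact hvvH (h0.symm.trans h2)
  have houtdeg_vH : M₀.outdeg vH = 0 := by
    show (F.filter fun a => a.1 = vH).card = 0
    rw [Finset.card_eq_zero]
    apply Finset.eq_empty_iff_forall_notMem.mpr
    intro a ha
    obtain ⟨haF, h1⟩ := Finset.mem_filter.mp ha
    obtain ⟨haN, hp1, hp2⟩ := Finset.mem_filter.mp haF
    have harc2 : (vH, a.2) ∈ N.arcs := by rw [← h1]; exact haN
    rcases outdeg_two_cases hisoout harce1 harce2 he12 harc2 with h2 | h2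
    · exact hp2 (h2 ▸ he1R)
    · exact hp2 (h2 ▸ he2R)
  have hindeg_vH : M₀.indeg vH = 1 := by
    rw [hindeg_ne vH hvH_nR hz_ne_vH.symm]
    exact hisoin
  -- no arcs of M₀ touch z
  have hz_noarc : ∀ a ∈ F, a.1 ≠ z ∧ a.2 ≠ z := by
    intro a ha
    obtain ⟨haN, hp1, hp2⟩ := Finset.mem_filter.mp ha
    constructor
    · intro h0
      exact no_out_of_outdeg_zero hz_leaf.2 (by rw [← h0]; exact haN)
    · intro h0
      have : a.1 = h := indeg_one_unique hz_leaf.1 (by rw [← h0]; exact haN) hzarc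
      exact hp1 (this ▸ hh_R)
  have hMvert : ∀ v : ℕ, v ∈ M₀.verts ↔ (v ∈ N.verts ∧ v ∉ R ∧ v ≠ z) := by
    intro v
    show v ∈ (N.verts \ R).erase z ↔ _
    rw [Finset.mem_erase, Finset.mem_sdiff]
    tauto
  -- M₀ is a phylogenetic network on insert vH (X \ S)
  have hM₀phy : M₀.IsPhyloNet (insert vH (X \ S)) := by
    refine ⟨?_, ?_, ?_, ?_, ?_, ?_, ?_, ?_, ?_⟩
    · intro a ha
      obtain ⟨haN, hp1, hp2⟩ := Finset.mem_filter.mp ha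
      obtain ⟨h1, h2⟩ := hz_noarc a ha
      exact ⟨(hMvert a.1).mpr ⟨(hend a haN).1, hp1, h1⟩,
        (hMvert a.2).mpr ⟨(hend a haN).2, hp2, h2⟩⟩
    · intro v hv
      apply hac v
      apply Relation.TransGen.mono (r := M₀.ArcRel) ?_ _ _ hv
      intro a b hab
      exact (Finset.mem_filter.mp hab).1
    · exact (hMvert N.root).mpr ⟨hroot, hroot_nR, hroot_ne_z⟩
    · rw [show M₀.root = N.root from rfl, hindeg_ne _ hroot_nR hroot_ne_z]
      exact hrind
    · intro v hv hind
      obtain ⟨h1, h2, h3⟩ := (hMvert v).mp hv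
      rw [hindeg_ne _ h2 h3] at hind
      exact huniq v h1 hind
    · intro x hx
      rcases Finset.mem_insert.mp hx with rfl | hx2
      · exact (hMvert x).mpr ⟨hvH_verts, hvH_nR, hz_ne_vH.symm⟩
      · obtain ⟨h1, h2⟩ := Finset.mem_sdiff.mp hx2
        refine (hMvert x).mpr ⟨hXsub h1, ?_, ?_⟩
        · intro h0
          exact h2 (Finset.mem_of_mem_erase (hXR x h1 h0))
        · intro h0
          exact h2 (h0 ▸ hz_S)
    · intro v hv
      obtain ⟨h1, h2, h3⟩ := (hMvert v).mp hv
      by_cases hvvH : v = vH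
      · rw [hvvH]
        constructor
        · intro _
          exact Finset.mem_insert_self _ _
        · intro _
          exact ⟨hindeg_vH, houtdeg_vH⟩
      · unfold IsLeaf
        rw [hindeg_ne _ h2 h3, houtdeg_ne _ h2 hvvH]
        constructor
        · intro hl
          refine Finset.mem_insert.mpr (Or.inr (Finset.mem_sdiff.mpr
            ⟨(hleaf v h1).mp hl, ?_⟩))
          intro h0
          rcases Finset.mem_erase.mp (Finset.mem_erase.mpr ⟨h3, h0⟩) with ⟨-, -⟩
          exact h2 (by rw [hRdef]; exact Finset.mem_union_right _ (Finset.mem_erase.mpr ⟨h3, h0⟩))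
        · intro hm
          rcases Finset.mem_insert.mp hm with h0 | h0
          · exact absurd h0 hvvH
          · exact (hleaf v h1).mpr (Finset.mem_sdiff.mp h0).1
    · intro v hv hvr hout hind
      obtain ⟨h1, h2, h3⟩ := (hMvert v).mp hv
      by_cases hvvH : v = vH
      · rw [hvvH, houtdeg_vH] at hout
        omega
      · rw [hindeg_ne _ h2 h3] at hind
        rw [houtdeg_ne _ h2 hvvH] at hout ⊢
        exact htree v h1 hvr hout hind
    · intro v hv hind
      obtain ⟨h1, h2, h3⟩ := (hMvert v).mp hv
      by_cases hvvH : v = vH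
      · rw [hvvH, hindeg_vH] at hind
        omega
      · rw [hindeg_ne _ h2 h3] at hind
        rw [houtdeg_ne _ h2 hvvH]
        exact hhyb v h1 hind
  have hM₀nest : M₀.OneNested := oneNested_mono (Finset.filter_subset _ _) hnest
  have hM₀end := hM₀phy.1
  -- the renaming is injective on M₀.verts
  have hinj : Set.InjOn (rn vH z) ↑M₀.verts := by
    intro a ha b hb hab
    rw [Finset.mem_coe, hMvert] at ha hb
    unfold rn at hab
    by_cases h1 : a = vH <;> by_cases h2 : b = vH <;> simp [h1, h2] at hab
    · rw [h1, h2]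
    · exact absurd hab.symm hb.2.2
    · exact absurd hab ha.2.2
    · exact hab
  have hphyR := relabel_phylo (g := rn vH z) hM₀phy hinj
  have hnestR := relabel_oneNested (g := rn vH z) hM₀end hinj hM₀nest
  -- identify the relabeled net with the isolated cactus reduction
  have hveq : (N.verts \ R).image (rn vH z) = M₀.verts.image (rn vH z) := by
    ext x
    simp only [Finset.mem_image]
    constructor
    · rintro ⟨y, hy, rfl⟩
      by_cases hyz : y = z
      · refine ⟨vH, (hMvert vH).mpr ⟨hvH_verts, hvH_nR, hz_ne_vH.symm⟩, ?_⟩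
        subst hyz
        simp [rn, hz_ne_vH]
      · exact ⟨y, (hMvert y).mpr ⟨(Finset.mem_sdiff.mp hy).1, (Finset.mem_sdiff.mp hy).2, hyz⟩,
          rfl⟩
    · rintro ⟨y, hy, rfl⟩
      obtain ⟨h1, h2, h3⟩ := (hMvert y).mp hy
      exact ⟨y, Finset.mem_sdiff.mpr ⟨h1, h2⟩, rfl⟩
  have heqnet : N.isoCactusRed (insert h (P ++ Q).toFinset) S z vH =
      Net.mk (M₀.verts.image (rn vH z))
        (M₀.arcs.image fun a => (rn vH z a.1, rn vH z a.2)) (rn vH z M₀.root) := by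
    show Net.mk ((N.verts \ R).image (rn vH z)) _ _ = _
    rw [hveq]
  have heqX : (insert vH (X \ S)).image (rn vH z) = X \ S.erase z := by
    rw [Finset.image_insert]
    have h1 : rn vH z vH = z := by simp [rn]
    have h2 : (X \ S).image (rn vH z) = X \ S := by
      ext x
      simp only [Finset.mem_image, Finset.mem_sdiff]
      constructor
      · rintro ⟨y, ⟨hy1, hy2⟩, rfl⟩
        have hyne : y ≠ vH := by
          intro h0; rw [h0] at hy1; exact hvH_nX hy1
        have hyy : rn vH z y = y := by
          unfold rn; rw [if_neg hyne]
        rw [hyy]; exact ⟨hy1, hy2⟩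
      · intro hx
        refine ⟨x, hx, ?_⟩
        have hxne : x ≠ vH := by
          intro h0; rw [h0] at hx; exact hvH_nX hx.1
        unfold rn; rw [if_neg hxne]
    rw [h1, h2]
    ext x
    simp only [Finset.mem_insert, Finset.mem_sdiff, Finset.mem_erase]
    constructor
    · rintro (rfl | ⟨h3, h4⟩)
      · exact ⟨hz_X, fun h5 => h5.1 rfl⟩
      · exact ⟨h3, fun h5 => h4 h5.2⟩
    · rintro ⟨h3, h4⟩
      by_cases h5 : x = z
      · exact Or.inl h5
      · exact Or.inr ⟨h3, fun h6 => h4 ⟨h5, h6⟩⟩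
  constructor
  · rw [heqnet, ← heqX]
    exact hphyR
  · rw [heqnet]
    exact hnestR

lemma cactus_support_facts {A B P Q : List ℕ} {vH h : ℕ}
    (hcd : N.IsCactusData X A B z vH h P Q) :
    z ∈ cactusSupport A B z ∧ cactusSupport A B z ⊆ X := by
  obtain ⟨hA, hndX, hXmem, -⟩ := hcd
  constructor
  · show z ∈ (A ++ B ++ [z]).toFinset
    rw [List.mem_toFinset]
    simp
  · intro x hx
    rw [show cactusSupport A B z = (A ++ B ++ [z]).toFinset from rfl,
      List.mem_toFinset] at hx
    exact hXmem x hx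

end Net
/-- applying any one of the four reductions `R_{z:S}` to a 1-nested
phylogenetic network `N` on `X`, `|X| ≥ 2`, yields a 1-nested phylogenetic network on
`X - (S - {z})`, which has `|S| - 1` fewer leaves than `N`. -/
theorem reduction_oneNested (N : Net) (X : Finset ℕ)
    (hphy : N.IsPhyloNet X) (hnest : N.OneNested) (hX : 2 ≤ X.card)
    (k : Net.RedKind) (S : Finset ℕ) (z : ℕ) (M : Net)
    (hred : Net.IsReductionOf k N X S z M) :
    M.IsPhyloNet (X \ S.erase z) ∧ M.OneNested ∧
      (X \ S.erase z).card + (S.card - 1) = X.card := by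
  cases k with
  | cherry =>
    obtain ⟨hz, hch, hniso, hM⟩ := hred
    subst hM
    obtain ⟨h1, h2⟩ := Net.cherry_case hphy hnest hz hch hniso
    exact ⟨h1, h2, Net.card_sdiff_helper hch.2.1 hz⟩
  | isoCherry =>
    obtain ⟨hz, hS2, hSX, vS, hvS, hout, hind, hM⟩ := hred
    subst hM
    obtain ⟨h1, h2⟩ := Net.isoCherry_case hphy hnest hz hS2 hSX hvS hout hind
    exact ⟨h1, h2, Net.card_sdiff_helper hSX hz⟩
  | cactus =>
    obtain ⟨A, B, vH, h, P, Q, hcd, hSsupp, hniso, hM⟩ := hred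
    subst hSsupp
    subst hM
    obtain ⟨h1, h2⟩ := Net.cactus_case hphy hnest hcd hniso
    obtain ⟨hz_supp, hsupp_X⟩ := Net.cactus_support_facts hcd
    exact ⟨h1, h2, Net.card_sdiff_helper hsupp_X hz_supp⟩
  | isoCactus =>
    obtain ⟨A, B, vH, h, P, Q, hcd, hSsupp, hiso, hM⟩ := hred
    subst hSsupp
    subst hM
    obtain ⟨h1, h2⟩ := Net.isoCactus_case hphy hnest hcd hiso
    obtain ⟨hz_supp, hsupp_X⟩ := Net.cactus_support_facts hcd
    exact ⟨h1, h2, Net.card_sdiff_helper hsupp_X hz_supp⟩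
end
end

section
/- Let N and N' be two 1-nested phylogenetic networks on the same finite set X with |X| ≥ 3, and suppose N and N' are isomorphic. If one of the reductions C_{z:S}, C̄_{z:S}, H_{z:S}, H̄_{z:S} may be applied to N, then the same reduction may also be applied to N', and the two resulting 1-nested networks are isomorphic. -/
/-!
Common formalization infrastructure for 1-nested phylogenetic networks and trinets
(Huber–Moulton, "Encoding and Constructing 1-Nested Phylogenetic Networks with Trinets").

Networks are modelled concretely: the vertex set is a finite set of natural numbers,
arcs are a finite set of ordered pairs (so there are no multiple arcs), and leaves are
labelled by themselves (i.e. the leaf set of a network on `X` is literally `X`).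
-/

noncomputable section

namespace Net

/-! ### Auxiliary infrastructure for transporting reductions along isomorphisms -/

/-- Bundled data of an isomorphism between two phylogenetic networks on `X`. -/
structure IsoCtx (N N' : Net) (X : Finset ℕ) (f : ℕ → ℕ) : Prop where
  phy : N.IsPhyloNet X
  phy' : N'.IsPhyloNet X
  bij : Set.BijOn f ↑N.verts ↑N'.verts
  arcs : ∀ u ∈ N.verts, ∀ w ∈ N.verts, ((u, w) ∈ N.arcs ↔ (f u, f w) ∈ N'.arcs)
  root : f N.root = N'.root
  fix : ∀ x ∈ X, f x = x

namespace IsoCtx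

variable {N N' : Net} {X : Finset ℕ} {f : ℕ → ℕ} (hc : IsoCtx N N' X f)
include hc

lemma XsubV : X ⊆ N.verts := hc.phy.2.2.2.2.2.1

lemma XsubV' : X ⊆ N'.verts := hc.phy'.2.2.2.2.2.1

lemma maps {u : ℕ} (hu : u ∈ N.verts) : f u ∈ N'.verts := hc.bij.mapsTo hu

lemma inj {u w : ℕ} (hu : u ∈ N.verts) (hw : w ∈ N.verts) (h : f u = f w) : u = w :=
  hc.bij.injOn hu hw h

lemma surj {v' : ℕ} (hv' : v' ∈ N'.verts) : ∃ u ∈ N.verts, f u = v' := by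
  obtain ⟨u, hu, hfu⟩ := hc.bij.surjOn hv'
  exact ⟨u, hu, hfu⟩

lemma arc_mem {a : ℕ × ℕ} (ha : a ∈ N.arcs) : a.1 ∈ N.verts ∧ a.2 ∈ N.verts := hc.phy.1 a ha

lemma arc_mem' {a : ℕ × ℕ} (ha : a ∈ N'.arcs) : a.1 ∈ N'.verts ∧ a.2 ∈ N'.verts :=
  hc.phy'.1 a ha

lemma arc_map {a : ℕ × ℕ} (ha : a ∈ N.arcs) : (f a.1, f a.2) ∈ N'.arcs :=
  (hc.arcs a.1 (hc.arc_mem ha).1 a.2 (hc.arc_mem ha).2).mp ha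

lemma arc_pull {a' : ℕ × ℕ} (ha' : a' ∈ N'.arcs) :
    ∃ a ∈ N.arcs, (f a.1, f a.2) = a' := by
  obtain ⟨u, hu, hfu⟩ := hc.surj (hc.arc_mem' ha').1
  obtain ⟨w, hw, hfw⟩ := hc.surj (hc.arc_mem' ha').2
  refine ⟨(u, w), ?_, by simp [hfu, hfw]⟩
  exact (hc.arcs u hu w hw).mpr (by simpa [hfu, hfw] using ha')

lemma fix_pull {u : ℕ} (hu : u ∈ N.verts) (hfu : f u ∈ X) : f u = u := by
  have h1 : f (f u) = f u := hc.fix _ hfu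
  exact hc.inj (hc.XsubV hfu) hu h1

lemma memE_iff {E : Finset ℕ} (hE : E ⊆ X) {u : ℕ} (hu : u ∈ N.verts) :
    u ∈ E ↔ f u ∈ E := by
  constructor
  · intro h; rwa [hc.fix u (hE h)]
  · intro h; rwa [hc.fix_pull hu (hE h)] at h

lemma indeg_map {v : ℕ} (hv : v ∈ N.verts) : N'.indeg (f v) = N.indeg v := by
  have himg : N'.arcs.filter (fun a => a.2 = f v)
      = (N.arcs.filter fun a => a.2 = v).image (fun a => (f a.1, f a.2)) := by
    ext a'
    simp only [Finset.mem_filter, Finset.mem_image]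
    constructor
    · rintro ⟨ha', hv'⟩
      obtain ⟨a, ha, rfl⟩ := hc.arc_pull ha'
      exact ⟨a, ⟨ha, hc.inj (hc.arc_mem ha).2 hv hv'⟩, rfl⟩
    · rintro ⟨a, ⟨ha, rfl⟩, rfl⟩
      exact ⟨hc.arc_map ha, rfl⟩
  unfold Net.indeg
  rw [himg, Finset.card_image_of_injOn]
  intro a ha b hb hab
  simp only [Finset.coe_filter, Set.mem_setOf_eq] at ha hb
  simp only [Prod.mk.injEq] at hab
  have h1 := hc.inj (hc.arc_mem ha.1).1 (hc.arc_mem hb.1).1 hab.1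
  have h2 := hc.inj (hc.arc_mem ha.1).2 (hc.arc_mem hb.1).2 hab.2
  exact Prod.ext h1 h2

lemma outdeg_map {v : ℕ} (hv : v ∈ N.verts) : N'.outdeg (f v) = N.outdeg v := by
  have himg : N'.arcs.filter (fun a => a.1 = f v)
      = (N.arcs.filter fun a => a.1 = v).image (fun a => (f a.1, f a.2)) := by
    ext a'
    simp only [Finset.mem_filter, Finset.mem_image]
    constructor
    · rintro ⟨ha', hv'⟩
      obtain ⟨a, ha, rfl⟩ := hc.arc_pull ha'
      exact ⟨a, ⟨ha, hc.inj (hc.arc_mem ha).1 hv hv'⟩, rfl⟩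
    · rintro ⟨a, ⟨ha, rfl⟩, rfl⟩
      exact ⟨hc.arc_map ha, rfl⟩
  unfold Net.outdeg
  rw [himg, Finset.card_image_of_injOn]
  intro a ha b hb hab
  simp only [Finset.coe_filter, Set.mem_setOf_eq] at ha hb
  simp only [Prod.mk.injEq] at hab
  have h1 := hc.inj (hc.arc_mem ha.1).1 (hc.arc_mem hb.1).1 hab.1
  have h2 := hc.inj (hc.arc_mem ha.1).2 (hc.arc_mem hb.1).2 hab.2
  exact Prod.ext h1 h2

/-- A vertex with an outgoing arc is not a leaf, hence not in `X`. -/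
lemma not_in_X_of_out {v w : ℕ} (hvw : (v, w) ∈ N.arcs) : v ∉ X := by
  intro hvX
  have hv : v ∈ N.verts := (hc.arc_mem hvw).1
  have hleaf : N.IsLeaf v := (hc.phy.2.2.2.2.2.2.1 v hv).mpr hvX
  have : (v, w) ∈ N.arcs.filter fun a => a.1 = v := by
    simp [Finset.mem_filter, hvw]
  have hpos : N.outdeg v ≠ 0 := by
    unfold Net.outdeg
    exact Finset.card_ne_zero_of_mem this
  exact hpos hleaf.2

lemma delete_iso (W W' Y : Finset ℕ) {M M' : Net}
    (hWiff : ∀ u ∈ N.verts, (u ∈ W ↔ f u ∈ W'))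
    (hY : Y ⊆ X)
    (hMv : M.verts = N.verts \ W)
    (hMa : M.arcs = N.arcs.filter fun a => a.1 ∉ W ∧ a.2 ∉ W)
    (hMr : M.root = N.root)
    (hMv' : M'.verts = N'.verts \ W')
    (hMa' : M'.arcs = N'.arcs.filter fun a => a.1 ∉ W' ∧ a.2 ∉ W')
    (hMr' : M'.root = N'.root) :
    M.IsIsoOn M' Y := by
  refine ⟨f, ⟨?_, ?_, ?_⟩, ?_, ?_, fun x hx => hc.fix x (hY hx)⟩
  · intro u hu
    rw [hMv] at hu
    rw [hMv']
    simp only [Finset.coe_sdiff, Set.mem_diff, Finset.mem_coe, Finset.mem_sdiff] at *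
    exact ⟨hc.maps hu.1, fun h => hu.2 ((hWiff u hu.1).mpr h)⟩
  · refine hc.bij.injOn.mono ?_
    rw [hMv]
    intro u hu
    simp only [Finset.coe_sdiff, Set.mem_diff, Finset.mem_coe] at hu ⊢
    exact hu.1
  · intro u' hu'
    rw [hMv'] at hu'
    rw [hMv]
    simp only [Finset.coe_sdiff, Set.mem_diff, Finset.mem_coe] at hu'
    obtain ⟨u, hu, rfl⟩ := hc.surj hu'.1
    refine Set.mem_image_of_mem f ?_
    simp only [Finset.coe_sdiff, Set.mem_diff, Finset.mem_coe]
    exact ⟨hu, fun h => hu'.2 ((hWiff u hu).mp h)⟩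
  · intro u hu w hw
    rw [hMv] at hu hw
    simp only [Finset.mem_sdiff] at hu hw
    rw [hMa, hMa']
    simp only [Finset.mem_filter]
    constructor
    · rintro ⟨ha, h1, h2⟩
      exact ⟨hc.arc_map ha, fun h => h1 ((hWiff u hu.1).mpr h),
        fun h => h2 ((hWiff w hw.1).mpr h)⟩
    · rintro ⟨ha', _, _⟩
      exact ⟨(hc.arcs u hu.1 w hw.1).mpr ha', hu.2, hw.2⟩
  · rw [hMr, hMr']; exact hc.root

lemma delete_ins_iso (W W' Y : Finset ℕ) (v₀ z : ℕ) {M M' : Net}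
    (hWiff : ∀ u ∈ N.verts, (u ∈ W ↔ f u ∈ W'))
    (hv₀ : v₀ ∈ N.verts) (hz : z ∈ X) (hY : Y ⊆ X)
    (hMv : M.verts = N.verts \ W)
    (hMa : M.arcs = insert (v₀, z) (N.arcs.filter fun a => a.1 ∉ W ∧ a.2 ∉ W))
    (hMr : M.root = N.root)
    (hMv' : M'.verts = N'.verts \ W')
    (hMa' : M'.arcs = insert (f v₀, z) (N'.arcs.filter fun a => a.1 ∉ W' ∧ a.2 ∉ W'))
    (hMr' : M'.root = N'.root) :
    M.IsIsoOn M' Y := by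
  have hzv : z ∈ N.verts := hc.XsubV hz
  refine ⟨f, ⟨?_, ?_, ?_⟩, ?_, ?_, fun x hx => hc.fix x (hY hx)⟩
  · intro u hu
    rw [hMv] at hu
    rw [hMv']
    simp only [Finset.coe_sdiff, Set.mem_diff, Finset.mem_coe, Finset.mem_sdiff] at *
    exact ⟨hc.maps hu.1, fun h => hu.2 ((hWiff u hu.1).mpr h)⟩
  · refine hc.bij.injOn.mono ?_
    rw [hMv]
    intro u hu
    simp only [Finset.coe_sdiff, Set.mem_diff, Finset.mem_coe] at hu ⊢
    exact hu.1
  · intro u' hu'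
    rw [hMv'] at hu'
    rw [hMv]
    simp only [Finset.coe_sdiff, Set.mem_diff, Finset.mem_coe] at hu'
    obtain ⟨u, hu, rfl⟩ := hc.surj hu'.1
    refine Set.mem_image_of_mem f ?_
    simp only [Finset.coe_sdiff, Set.mem_diff, Finset.mem_coe]
    exact ⟨hu, fun h => hu'.2 ((hWiff u hu).mp h)⟩
  · intro u hu w hw
    rw [hMv] at hu hw
    simp only [Finset.mem_sdiff] at hu hw
    rw [hMa, hMa']
    simp only [Finset.mem_insert, Finset.mem_filter, Prod.mk.injEq]
    constructor
    · rintro (⟨e1, e2⟩ | ⟨ha, h1, h2⟩)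
      · exact Or.inl ⟨by rw [e1], by rw [e2, hc.fix z hz]⟩
      · exact Or.inr ⟨hc.arc_map ha, fun h => h1 ((hWiff u hu.1).mpr h),
          fun h => h2 ((hWiff w hw.1).mpr h)⟩
    · rintro (⟨h1, h2⟩ | ⟨ha', _, _⟩)
      · refine Or.inl ⟨hc.inj hu.1 hv₀ h1, hc.inj hw.1 hzv ?_⟩
        rw [h2, hc.fix z hz]
      · exact Or.inr ⟨(hc.arcs u hu.1 w hw.1).mpr ha', hu.2, hw.2⟩
  · rw [hMr, hMr']; exact hc.root

lemma rn_key {v₀ : ℕ} (z : ℕ) (hv₀ : v₀ ∈ N.verts) (hz : z ∈ X) :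
    ∀ a ∈ N.verts, f (rn v₀ z a) = rn (f v₀) z (f a) := by
  intro a ha
  by_cases hav : a = v₀
  · subst hav
    simp [rn, hc.fix z hz]
  · have : f a ≠ f v₀ := fun h => hav (hc.inj ha hv₀ h)
    simp [rn, hav, this]

lemma rn_mem {v₀ : ℕ} (z : ℕ) (hz : z ∈ X) {a : ℕ} (ha : a ∈ N.verts) :
    rn v₀ z a ∈ N.verts := by
  by_cases hav : a = v₀
  · subst hav; simp [rn]; exact hc.XsubV hz
  · simpa [rn, hav] using ha

lemma relabel_iso (W W' Y : Finset ℕ) (v₀ z : ℕ) {M M' : Net}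
    (hWiff : ∀ u ∈ N.verts, (u ∈ W ↔ f u ∈ W'))
    (hv₀ : v₀ ∈ N.verts) (hz : z ∈ X) (hY : Y ⊆ X)
    (hMv : M.verts = (N.verts \ W).image (rn v₀ z))
    (hMa : M.arcs = (N.arcs.filter fun a => a.1 ∉ W ∧ a.2 ∉ W).image
        fun a => (rn v₀ z a.1, rn v₀ z a.2))
    (hMr : M.root = rn v₀ z N.root)
    (hMv' : M'.verts = (N'.verts \ W').image (rn (f v₀) z))
    (hMa' : M'.arcs = (N'.arcs.filter fun a => a.1 ∉ W' ∧ a.2 ∉ W').image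
        fun a => (rn (f v₀) z a.1, rn (f v₀) z a.2))
    (hMr' : M'.root = rn (f v₀) z N'.root) :
    M.IsIsoOn M' Y := by
  have key := hc.rn_key (v₀ := v₀) z hv₀ hz
  have hMsub : ∀ u ∈ M.verts, u ∈ N.verts := by
    intro u hu
    rw [hMv] at hu
    simp only [Finset.mem_image, Finset.mem_sdiff] at hu
    obtain ⟨a, ⟨hav, _⟩, rfl⟩ := hu
    exact hc.rn_mem z hz hav
  refine ⟨f, ⟨?_, ?_, ?_⟩, ?_, ?_, fun x hx => hc.fix x (hY hx)⟩
  · intro u hu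
    simp only [Finset.mem_coe] at hu
    rw [hMv] at hu
    rw [hMv']
    simp only [Finset.mem_image, Finset.mem_sdiff] at hu
    obtain ⟨a, ⟨hav, haW⟩, rfl⟩ := hu
    simp only [Finset.mem_coe, Finset.mem_image, Finset.mem_sdiff]
    exact ⟨f a, ⟨hc.maps hav, fun h => haW ((hWiff a hav).mpr h)⟩, (key a hav).symm⟩
  · refine hc.bij.injOn.mono ?_
    intro u hu
    simp only [Finset.mem_coe] at hu ⊢
    exact hMsub u hu
  · intro u' hu'
    simp only [Finset.mem_coe] at hu'
    rw [hMv'] at hu'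
    simp only [Finset.mem_image, Finset.mem_sdiff] at hu'
    obtain ⟨a', ⟨hav', haW'⟩, rfl⟩ := hu'
    obtain ⟨a, ha, rfl⟩ := hc.surj hav'
    refine ⟨rn v₀ z a, ?_, key a ha⟩
    simp only [Finset.mem_coe]
    rw [hMv]
    simp only [Finset.mem_image, Finset.mem_sdiff]
    exact ⟨a, ⟨ha, fun h => haW' ((hWiff a ha).mp h)⟩, rfl⟩
  · intro u hu w hw
    rw [hMa, hMa']
    simp only [Finset.mem_image, Finset.mem_filter, Prod.mk.injEq]
    constructor
    · rintro ⟨a, ⟨ha, h1, h2⟩, e1, e2⟩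
      refine ⟨(f a.1, f a.2), ⟨hc.arc_map ha,
        fun h => h1 ((hWiff a.1 (hc.arc_mem ha).1).mpr h),
        fun h => h2 ((hWiff a.2 (hc.arc_mem ha).2).mpr h)⟩, ?_, ?_⟩
      · rw [← e1, ← key a.1 (hc.arc_mem ha).1]
      · rw [← e2, ← key a.2 (hc.arc_mem ha).2]
    · rintro ⟨a', ⟨ha', h1, h2⟩, e1, e2⟩
      obtain ⟨a, ha, rfl⟩ := hc.arc_pull ha'
      simp only at e1 e2 h1 h2
      have ha1 := (hc.arc_mem ha).1
      have ha2 := (hc.arc_mem ha).2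
      have eu : rn v₀ z a.1 = u := by
        refine hc.inj (hc.rn_mem z hz ha1) (hMsub u hu) ?_
        rw [key a.1 ha1, e1]
      have ew : rn v₀ z a.2 = w := by
        refine hc.inj (hc.rn_mem z hz ha2) (hMsub w hw) ?_
        rw [key a.2 ha2, e2]
      exact ⟨a, ⟨ha, fun h => h1 ((hWiff a.1 ha1).mp h),
        fun h => h2 ((hWiff a.2 ha2).mp h)⟩, eu, ew⟩
  · rw [hMr, hMr']
    rw [key N.root hc.phy.2.2.1, hc.root]

lemma cherryVert_map {S : Finset ℕ} (hS : S ⊆ X) {v : ℕ} (hv : v ∈ N.verts)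
    (h : N.IsCherryVert X S v) : N'.IsCherryVert X S (f v) := by
  obtain ⟨_, h2, h3⟩ := h
  refine ⟨hc.maps hv, ?_, ?_⟩
  · intro x hx
    have := hc.arc_map (h2 x hx)
    simpa [hc.fix x (hS hx)] using this
  · intro x hxX hxS hmem
    have hxv : x ∈ N.verts := hc.XsubV hxX
    have : (v, x) ∈ N.arcs := by
      refine (hc.arcs v hv x hxv).mpr ?_
      simpa [hc.fix x hxX] using hmem
    exact h3 x hxX hxS this

lemma cherryVert_pull {S : Finset ℕ} (hS : S ⊆ X) {v : ℕ} (hv : v ∈ N.verts)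
    (h : N'.IsCherryVert X S (f v)) : N.IsCherryVert X S v := by
  obtain ⟨_, h2, h3⟩ := h
  refine ⟨hv, ?_, ?_⟩
  · intro x hx
    refine (hc.arcs v hv x (hc.XsubV (hS hx))).mpr ?_
    simpa [hc.fix x (hS hx)] using h2 x hx
  · intro x hxX hxS hmem
    have := hc.arc_map hmem
    exact h3 x hxX hxS (by simpa [hc.fix x hxX] using this)

lemma cactus_map {A B : List ℕ} {z vH h : ℕ} {P Q : List ℕ}
    (hcd : N.IsCactusData X A B z vH h P Q) :
    N'.IsCactusData X A B z (f vH) (f h) (P.map f) (Q.map f) := by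
  obtain ⟨h1, h2, h3, h4, h5, h6, h7, h8, h9, h10, h11, h12, h13, h14⟩ := hcd
  have hhm : h ∈ N.verts := h9 h (by simp)
  have harcrel : ∀ a b : ℕ, N.ArcRel a b → N'.ArcRel (f a) (f b) := by
    intro a b hab
    exact hc.arc_map (a := (a, b)) hab
  refine ⟨h1, h2, h3, by simp [h4], by simp [h5], ?_, ?_, ?_, ?_, ?_, ?_, ?_, ?_, ?_⟩
  · have e : f vH :: (P.map f ++ [f h]) = (vH :: (P ++ [h])).map f := by simp
    rw [e]; change List.IsChain _ _ at h6 ⊢; rw [List.isChain_map]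
    exact h6.imp (fun a b hab => harcrel a b hab)
  · have e : f vH :: (Q.map f ++ [f h]) = (vH :: (Q ++ [h])).map f := by simp
    rw [e]; change List.IsChain _ _ at h7 ⊢; rw [List.isChain_map]
    exact h7.imp (fun a b hab => harcrel a b hab)
  · have e : f vH :: f h :: (P.map f ++ Q.map f) = (vH :: h :: (P ++ Q)).map f := by simp
    rw [e]
    exact h8.map_on (fun x hx y hy hxy => hc.inj (h9 x hx) (h9 y hy) hxy)
  · intro u hu
    have e : f vH :: f h :: (P.map f ++ Q.map f) = (vH :: h :: (P ++ Q)).map f := by simp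
    rw [e] at hu
    obtain ⟨a, ha, rfl⟩ := List.mem_map.mp hu
    exact hc.maps (h9 a ha)
  · rw [hc.outdeg_map hhm]; exact h10
  · have hz : (f h, f z) ∈ N'.arcs := hc.arc_map h11
    rwa [hc.fix z (h3 z (by simp))] at hz
  · intro pr hpr
    rw [List.zip_map_left] at hpr
    obtain ⟨⟨p, a⟩, hpa, rfl⟩ := List.mem_map.mp hpr
    have harc : (f p, f a) ∈ N'.arcs := hc.arc_map (h12 (p, a) hpa)
    have haX : a ∈ X := h3 a (List.mem_append_left _ (List.mem_append_left _ (List.of_mem_zip hpa).2))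
    simpa [Prod.map, hc.fix a haX] using harc
  · intro pr hpr
    rw [List.zip_map_left] at hpr
    obtain ⟨⟨p, a⟩, hpa, rfl⟩ := List.mem_map.mp hpr
    have harc : (f p, f a) ∈ N'.arcs := hc.arc_map (h13 (p, a) hpa)
    have haX : a ∈ X := h3 a (List.mem_append_left _ (List.mem_append_right _ (List.of_mem_zip hpa).2))
    simpa [Prod.map, hc.fix a haX] using harc
  · intro u hu
    rw [← List.map_append] at hu
    obtain ⟨p, hp, rfl⟩ := List.mem_map.mp hu
    have hpv : p ∈ N.verts := h9 p (by simp [hp])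
    rw [hc.indeg_map hpv, hc.outdeg_map hpv]
    exact h14 p hp

end IsoCtx

end Net
/-- Lemma 4: if two 1-nested phylogenetic networks `N, N'` on `X`,
`|X| ≥ 3`, are isomorphic and a reduction `R_{z:S}` of kind `k` may be applied to `N`,
then the same reduction may be applied to `N'` and the two resulting 1-nested
networks are isomorphic. -/
theorem reduction_respects_iso (N N' : Net) (X : Finset ℕ)
    (hphy : N.IsPhyloNet X) (hnest : N.OneNested)
    (hphy' : N'.IsPhyloNet X) (hnest' : N'.OneNested)
    (hX : 3 ≤ X.card) (hiso : N.IsIsoOn N' X)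
    (k : Net.RedKind) (S : Finset ℕ) (z : ℕ) (M : Net)
    (hred : Net.IsReductionOf k N X S z M) :
    ∃ M' : Net, Net.IsReductionOf k N' X S z M' ∧ M.IsIsoOn M' (X \ S.erase z) := by
  obtain ⟨f, hbij, harcs, hroot, hfix⟩ := hiso
  have hc : Net.IsoCtx N N' X f := ⟨hphy, hphy', hbij, harcs, hroot, hfix⟩
  cases k with
  | cherry =>
    obtain ⟨hzS, ⟨hcard, hsub, v, hcv⟩, hniso, hM⟩ := hred
    have hv : v ∈ N.verts := hcv.1
    refine ⟨N'.cherryRed S z,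
      ⟨hzS, ⟨hcard, hsub, f v, hc.cherryVert_map hsub hv hcv⟩, ?_, rfl⟩, ?_⟩
    · rintro ⟨_, _, v', hcv', hout', hin'⟩
      obtain ⟨u, hu, rfl⟩ := hc.surj hcv'.1
      exact hniso ⟨hcard, hsub, u, hc.cherryVert_pull hsub hu hcv',
        by rw [← hc.outdeg_map hu]; exact hout',
        by rw [← hc.indeg_map hu]; exact hin'⟩
    · subst hM
      exact hc.delete_iso (S.erase z) (S.erase z) _
        (fun u hu => hc.memE_iff ((Finset.erase_subset _ _).trans hsub) hu)
        Finset.sdiff_subset rfl rfl rfl rfl rfl rfl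
  | isoCherry =>
    obtain ⟨hzS, hcard, hsub, vS, hcv, hout, hin, hM⟩ := hred
    have hv : vS ∈ N.verts := hcv.1
    refine ⟨N'.isoCherryRed S z (f vS),
      ⟨hzS, hcard, hsub, f vS, hc.cherryVert_map hsub hv hcv,
        by rw [hc.outdeg_map hv]; exact hout,
        by rw [hc.indeg_map hv]; exact hin, rfl⟩, ?_⟩
    subst hM
    exact hc.relabel_iso S S _ vS z (fun u hu => hc.memE_iff hsub hu) hv (hsub hzS)
      Finset.sdiff_subset rfl rfl rfl rfl rfl rfl
  | cactus =>
    obtain ⟨A, B, vH, h, P, Q, hcd, hS, hniso, hM⟩ := hred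
    have hcd' := hc.cactus_map hcd
    obtain ⟨h1, h2, h3, h4, h5, h6, h7, h8, h9, h10, h11, h12, h13, h14⟩ := hcd
    have hvH : vH ∈ N.verts := h9 vH (by simp)
    have hh : h ∈ N.verts := h9 h (by simp)
    have hzX : z ∈ X := h3 z (by simp)
    have hsub : S ⊆ X := by
      subst hS
      intro x hx
      exact h3 x (by simp [Net.cactusSupport] at hx ⊢; tauto)
    have hEX : S.erase z ⊆ X := (Finset.erase_subset _ _).trans hsub
    have hWiff : ∀ u ∈ N.verts,
        (u ∈ insert h (P ++ Q).toFinset ∪ S.erase z ↔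
         f u ∈ insert (f h) ((P.map f ++ Q.map f).toFinset) ∪ S.erase z) := by
      intro u hu
      simp only [Finset.mem_union, Finset.mem_insert, List.mem_toFinset, ← List.map_append,
        List.mem_map]
      constructor
      · rintro ((rfl | hm) | hm)
        · exact Or.inl (Or.inl rfl)
        · exact Or.inl (Or.inr ⟨u, hm, rfl⟩)
        · exact Or.inr (by rwa [hc.fix u (hEX hm)])
      · rintro ((he | ⟨p, hp, hfp⟩) | hm)
        · exact Or.inl (Or.inl (hc.inj hu hh he))
        · exact Or.inl (Or.inr (by
            rw [hc.inj hu (h9 p (by simp [hp])) hfp.symm]; exact hp))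
        · exact Or.inr ((hc.memE_iff hEX hu).mpr hm)
    refine ⟨N'.cactusRed (insert (f h) ((P.map f ++ Q.map f).toFinset)) S z (f vH),
      ⟨A, B, f vH, f h, P.map f, Q.map f, hcd', hS, ?_, rfl⟩, ?_⟩
    · intro hiso'
      exact hniso ⟨by rw [← hc.indeg_map hvH]; exact hiso'.1,
        by rw [← hc.outdeg_map hvH]; exact hiso'.2⟩
    · subst hM
      exact hc.delete_ins_iso (insert h (P ++ Q).toFinset ∪ S.erase z)
        (insert (f h) ((P.map f ++ Q.map f).toFinset) ∪ S.erase z) _ vH z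
        hWiff hvH hzX Finset.sdiff_subset rfl rfl rfl rfl rfl rfl
  | isoCactus =>
    obtain ⟨A, B, vH, h, P, Q, hcd, hS, hisoV, hM⟩ := hred
    have hcd' := hc.cactus_map hcd
    obtain ⟨h1, h2, h3, h4, h5, h6, h7, h8, h9, h10, h11, h12, h13, h14⟩ := hcd
    have hvH : vH ∈ N.verts := h9 vH (by simp)
    have hh : h ∈ N.verts := h9 h (by simp)
    have hzX : z ∈ X := h3 z (by simp)
    have hsub : S ⊆ X := by
      subst hS
      intro x hx
      exact h3 x (by simp [Net.cactusSupport] at hx ⊢; tauto)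
    have hEX : S.erase z ⊆ X := (Finset.erase_subset _ _).trans hsub
    have hWiff : ∀ u ∈ N.verts,
        (u ∈ insert h (P ++ Q).toFinset ∪ S.erase z ↔
         f u ∈ insert (f h) ((P.map f ++ Q.map f).toFinset) ∪ S.erase z) := by
      intro u hu
      simp only [Finset.mem_union, Finset.mem_insert, List.mem_toFinset, ← List.map_append,
        List.mem_map]
      constructor
      · rintro ((rfl | hm) | hm)
        · exact Or.inl (Or.inl rfl)
        · exact Or.inl (Or.inr ⟨u, hm, rfl⟩)
        · exact Or.inr (by rwa [hc.fix u (hEX hm)])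
      · rintro ((he | ⟨p, hp, hfp⟩) | hm)
        · exact Or.inl (Or.inl (hc.inj hu hh he))
        · exact Or.inl (Or.inr (by
            rw [hc.inj hu (h9 p (by simp [hp])) hfp.symm]; exact hp))
        · exact Or.inr ((hc.memE_iff hEX hu).mpr hm)
    refine ⟨N'.isoCactusRed (insert (f h) ((P.map f ++ Q.map f).toFinset)) S z (f vH),
      ⟨A, B, f vH, f h, P.map f, Q.map f, hcd', hS,
        ⟨by rw [hc.indeg_map hvH]; exact hisoV.1,
         by rw [hc.outdeg_map hvH]; exact hisoV.2⟩, rfl⟩, ?_⟩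
    subst hM
    exact hc.relabel_iso (insert h (P ++ Q).toFinset ∪ S.erase z)
      (insert (f h) ((P.map f ++ Q.map f).toFinset) ∪ S.erase z) _ vH z
      hWiff hvH hzX Finset.sdiff_subset rfl rfl rfl rfl rfl rfl
end
end
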